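/- arXiv:math/0404344 — 5 statements merged into one kernel-verified Lean document; each statement's English description precedes it below -/
import Mathlib

section
/- Let E and F be real Banach spaces, G and H Lie groups modelled on E and F, and f : G → H a group homomorphism. If f is C¹ as a map of manifolds (ContMDiff of order 1), then f is smooth (C^∞ as a map of manifolds). -/
/-!
Differentiating `f (g * h) = f g * f h` in `h` at `h = 1` gives
`Df(g) = D(L_{f g})(1) ∘ Df(1) ∘ D(L_g)(1)⁻¹`, and the right-hand side depends smoothly on `g` and
`f g`. Read in charts at `1`, the derivative of a `Cⁿ` homomorphism is therefore again `Cⁿ`, so the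
homomorphism is `Cⁿ⁺¹` near `1`; left translations carry this regularity from `1` to every point.
-/

open scoped Manifold Topology
open Filter ContinuousLinearMap

section Calculus

variable {𝕜 : Type*} [NontriviallyNormedField 𝕜]
  {E : Type*} [NormedAddCommGroup E] [NormedSpace 𝕜 E]
  {F : Type*} [NormedAddCommGroup F] [NormedSpace 𝕜 F]

theorem fderiv_eq_of_eventually_semiconj {m n : E → E} {k : F → F} {Φ : E → F} {a x : E}
    (hm : DifferentiableAt 𝕜 m a) (hn : DifferentiableAt 𝕜 n x)
    (hk : DifferentiableAt 𝕜 k (Φ a)) (hΦa : DifferentiableAt 𝕜 Φ a)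
    (hΦx : DifferentiableAt 𝕜 Φ x) (hma : m a = x) (hnx : n x = a)
    (hΦm : Φ ∘ m =ᶠ[𝓝 a] k ∘ Φ) (hmn : m ∘ n =ᶠ[𝓝 x] id) :
    fderiv 𝕜 Φ x = (fderiv 𝕜 k (Φ a)).comp ((fderiv 𝕜 Φ a).comp (fderiv 𝕜 n x)) := by
  have hchain :
      (fderiv 𝕜 Φ x).comp (fderiv 𝕜 m a) = (fderiv 𝕜 k (Φ a)).comp (fderiv 𝕜 Φ a) := by
    rw [← hma] at hΦx
    rw [← hma, ← fderiv_comp a hΦx hm, ← fderiv_comp a hk hΦa, hΦm.fderiv_eq]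
  have hright_inv : (fderiv 𝕜 m a).comp (fderiv 𝕜 n x) = ContinuousLinearMap.id 𝕜 E := by
    rw [← hnx] at hm
    rw [← hnx, ← fderiv_comp x hm hn, hmn.fderiv_eq, fderiv_id]
  calc fderiv 𝕜 Φ x
      = (fderiv 𝕜 Φ x).comp ((fderiv 𝕜 m a).comp (fderiv 𝕜 n x)) := by
        rw [hright_inv, comp_id]
    _ = _ := by rw [← comp_assoc, hchain, comp_assoc]

theorem Filter.Eventually.eventually_nhds_prodMk {X Y : Type*} [TopologicalSpace X]
    [TopologicalSpace Y] {P : X × Y → Prop} {x₀ : X} {g : X → Y} (hg : ContinuousAt g x₀)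
    (h : ∀ᶠ p in 𝓝 (x₀, g x₀), P p) : ∀ᶠ x in 𝓝 x₀, ∀ᶠ y in 𝓝 (g x), P (x, y) :=
  ((continuousAt_id.prodMk hg).eventually h.eventually_nhds).mono fun _ hx =>
    (continuous_const.prodMk continuous_id).continuousAt.eventually hx

theorem contDiffAt_succ_of_map_mul {μ ν : E × E → E} {μH : F × F → F} {Φ : E → F} {a : E}
    {b : F} {n : ℕ} (hμ : ContDiffAt 𝕜 1 μ (a, a)) (hν : ContDiffAt 𝕜 (n + 1) ν (a, a))
    (hμH : ContDiffAt 𝕜 (n + 1) μH (b, b)) (hΦa : Φ a = b) (hΦ₁ : ContDiffAt 𝕜 1 Φ a)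
    (hΦ : ContDiffAt 𝕜 n Φ a) (hmul : ∀ᶠ p in 𝓝 (a, a), Φ (μ p) = μH (Φ p.1, Φ p.2))
    (hmul_invMul : ∀ᶠ p in 𝓝 (a, a), μ (p.1, ν p) = p.2)
    (hinvMul_self : ∀ᶠ x in 𝓝 a, ν (x, x) = a) (hmul_one : ∀ᶠ x in 𝓝 a, μ (x, a) = x) :
    ContDiffAt 𝕜 (n + 1) Φ a := by
  subst hΦa
  -- `ν (x, ·)` is a right inverse of `μ (x, ·)`, so its derivative inverts `D(μ (x, ·))(a)`
  -- without inverting an operator.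
  set Φ' : E → E →L[𝕜] F := fun x =>
    (fderiv 𝕜 (fun z => μH (Φ x, z)) (Φ a)).comp
      ((fderiv 𝕜 Φ a).comp (fderiv 𝕜 (fun y => ν (x, y)) x))
  refine contDiffAt_succ_iff_hasFDerivAt.2 ⟨Φ', Eventually.exists_mem ?_, ?_⟩
  · have hμ' : ∀ᶠ x in 𝓝 a, DifferentiableAt 𝕜 μ (x, a) :=
      (continuousAt_id.prodMk continuousAt_const).eventually
        ((hμ.eventually (by simp)).mono fun p hp => hp.differentiableAt one_ne_zero)
    have hν' : ∀ᶠ x in 𝓝 a, DifferentiableAt 𝕜 ν (x, x) :=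
      (continuousAt_id.prodMk continuousAt_id).eventually
        ((hν.eventually (by simp)).mono fun p hp => hp.differentiableAt (by simp))
    have hμH' : ∀ᶠ x in 𝓝 a, DifferentiableAt 𝕜 μH (Φ x, Φ a) :=
      (hΦ₁.continuousAt.prodMk continuousAt_const).eventually
        ((hμH.eventually (by simp)).mono fun p hp => hp.differentiableAt (by simp))
    have hΦ₁' : ∀ᶠ x in 𝓝 a, DifferentiableAt 𝕜 Φ x :=
      (hΦ₁.eventually (by simp)).mono fun x hx => hx.differentiableAt one_ne_zero
    filter_upwards [hμ', hν', hμH', hΦ₁', hmul.eventually_nhds_prodMk continuousAt_const,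
      hmul_invMul.eventually_nhds_prodMk continuousAt_id, hinvMul_self, hmul_one]
      with x hμx hνx hμHx hΦx hmulx hmul_invMulx hinvMulx hmul_onex
    convert hΦx.hasFDerivAt using 1
    exact (fderiv_eq_of_eventually_semiconj (hμx.comp a (by fun_prop))
      (hνx.comp x (by fun_prop)) (hμHx.comp (Φ a) (by fun_prop))
      (hΦ₁.differentiableAt one_ne_zero) hΦx hmul_onex hinvMulx hmulx hmul_invMulx).symm
  · have hμH_fderiv : ContDiffAt 𝕜 n (fun x => fderiv 𝕜 (fun z => μH (Φ x, z)) (Φ a)) a :=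
      (ContDiffAt.fderiv (f := fun p z => μH (p, z)) hμH contDiffAt_const le_rfl).comp a hΦ
    have hν_fderiv : ContDiffAt 𝕜 n (fun x => fderiv 𝕜 (fun y => ν (x, y)) x) a :=
      ContDiffAt.fderiv (f := fun x y => ν (x, y)) hν contDiffAt_id le_rfl
    exact hμH_fderiv.clm_comp (contDiffAt_const.clm_comp hν_fderiv)

end Calculus

section Charts

variable {𝕜 : Type*} [NontriviallyNormedField 𝕜]
  {E : Type*} [NormedAddCommGroup E] [NormedSpace 𝕜 E]
  {E' : Type*} [NormedAddCommGroup E'] [NormedSpace 𝕜 E']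
  {F : Type*} [NormedAddCommGroup F] [NormedSpace 𝕜 F]

theorem tendsto_extChartAt_symm_prodMk {HM HM' : Type*} [TopologicalSpace HM]
    [TopologicalSpace HM'] {I : ModelWithCorners 𝕜 E HM} {I' : ModelWithCorners 𝕜 E' HM'}
    {M M' : Type*} [TopologicalSpace M] [ChartedSpace HM M] [TopologicalSpace M']
    [ChartedSpace HM' M'] (x : M) (x' : M') :
    Tendsto (fun p : E × E' => ((extChartAt I x).symm p.1, (extChartAt I' x').symm p.2))
      (𝓝 (extChartAt I x x, extChartAt I' x' x')) (𝓝 (x, x')) := by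
  have h := (continuousAt_extChartAt_symm (I := I) x).prodMap'
    (continuousAt_extChartAt_symm (I := I') x')
  rwa [ContinuousAt, Prod.map_apply, extChartAt_to_inv, extChartAt_to_inv] at h

theorem ContMDiffAt.contDiffAt_extChartAt₂ {M M' N : Type*} [TopologicalSpace M]
    [ChartedSpace E M] [TopologicalSpace M'] [ChartedSpace E' M'] [TopologicalSpace N]
    [ChartedSpace F N] {n : WithTop ℕ∞} {χ : M → M' → N} {x : M} {x' : M'} {y : N}
    (hχ : ContMDiffAt (𝓘(𝕜, E).prod 𝓘(𝕜, E')) 𝓘(𝕜, F) n (Function.uncurry χ) (x, x'))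
    (hy : χ x x' = y) :
    ContDiffAt 𝕜 n (fun q : E × E' => extChartAt 𝓘(𝕜, F) y
        (χ ((extChartAt 𝓘(𝕜, E) x).symm q.1) ((extChartAt 𝓘(𝕜, E') x').symm q.2)))
      (extChartAt 𝓘(𝕜, E) x x, extChartAt 𝓘(𝕜, E') x' x') := by
  subst hy
  set p := (extChartAt 𝓘(𝕜, E) x x, extChartAt 𝓘(𝕜, E') x' x')
  rw [← contMDiffAt_iff_contDiffAt]
  have h₁ := ((contMDiffWithinAt_extChartAt_symm_range_self (n := n) (I := 𝓘(𝕜, E)) x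
    ).contMDiffAt (by simp)).comp p (contMDiffAt_iff_contDiffAt.2 contDiffAt_fst)
  have h₂ := ((contMDiffWithinAt_extChartAt_symm_range_self (n := n) (I := 𝓘(𝕜, E')) x'
    ).contMDiffAt (by simp)).comp p (contMDiffAt_iff_contDiffAt.2 contDiffAt_snd)
  have hpx : (Function.comp (extChartAt 𝓘(𝕜, E) x).symm Prod.fst p,
      Function.comp (extChartAt 𝓘(𝕜, E') x').symm Prod.snd p) = (x, x') := by simp [p]
  exact contMDiffAt_extChartAt.comp_of_eq (hχ.comp_of_eq (h₁.prodMk h₂) hpx) (by simp [p])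

end Charts

section LocalGroupLaw

variable {𝕜 : Type*} [NontriviallyNormedField 𝕜]
  {E : Type*} [NormedAddCommGroup E] [NormedSpace 𝕜 E]
  {F : Type*} [NormedAddCommGroup F] [NormedSpace 𝕜 F]
  {HG : Type*} [TopologicalSpace HG] (I : ModelWithCorners 𝕜 E HG)
  {HH : Type*} [TopologicalSpace HH] (I' : ModelWithCorners 𝕜 F HH)
  (G : Type*) [TopologicalSpace G] [ChartedSpace HG G]
  {H : Type*} [TopologicalSpace H] [ChartedSpace HH H]

noncomputable def mulInChart [Monoid G] (p : E × E) : E :=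
  extChartAt I (1 : G) ((extChartAt I (1 : G)).symm p.1 * (extChartAt I (1 : G)).symm p.2)

noncomputable def invMulInChart [Group G] (p : E × E) : E :=
  extChartAt I (1 : G) (((extChartAt I (1 : G)).symm p.1)⁻¹ * (extChartAt I (1 : G)).symm p.2)

variable {G} in
noncomputable def MonoidHom.inChart [Monoid G] [Monoid H] (f : G →* H) : E → F :=
  extChartAt I' (1 : H) ∘ f ∘ (extChartAt I (1 : G)).symm

end LocalGroupLaw

section InModelCharts

variable {𝕜 : Type*} [NontriviallyNormedField 𝕜]
  {E : Type*} [NormedAddCommGroup E] [NormedSpace 𝕜 E]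
  {F : Type*} [NormedAddCommGroup F] [NormedSpace 𝕜 F]
  {G : Type*} [TopologicalSpace G] [ChartedSpace E G]
  {H : Type*} [TopologicalSpace H] [ChartedSpace F H]

theorem eventually_mulInChart_one [Monoid G] :
    ∀ᶠ x in 𝓝 (extChartAt 𝓘(𝕜, E) (1 : G) 1),
      mulInChart 𝓘(𝕜, E) G (x, extChartAt 𝓘(𝕜, E) (1 : G) 1) = x := by
  filter_upwards [extChartAt_target_mem_nhds (I := 𝓘(𝕜, E)) (1 : G)] with x hx
  simp only [mulInChart, extChartAt_to_inv, mul_one, (extChartAt _ _).right_inv hx]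

theorem invMulInChart_self [Group G] (x : E) :
    invMulInChart 𝓘(𝕜, E) G (x, x) = extChartAt 𝓘(𝕜, E) (1 : G) 1 := by
  simp only [invMulInChart, inv_mul_cancel]

theorem eventually_mulInChart_invMulInChart [Group G] [IsTopologicalGroup G] :
    ∀ᶠ p in 𝓝 (extChartAt 𝓘(𝕜, E) (1 : G) 1, extChartAt 𝓘(𝕜, E) (1 : G) 1),
      mulInChart 𝓘(𝕜, E) G (p.1, invMulInChart 𝓘(𝕜, E) G p) = p.2 := by
  have hsrc : ∀ᶠ q : G × G in 𝓝 (1, 1), q.1⁻¹ * q.2 ∈ (extChartAt 𝓘(𝕜, E) (1 : G)).source :=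
    (continuousAt_fst.inv.mul continuousAt_snd).eventually_mem
      (by simpa using extChartAt_source_mem_nhds (I := 𝓘(𝕜, E)) (1 : G))
  filter_upwards [(tendsto_extChartAt_symm_prodMk (1 : G) (1 : G)).eventually hsrc,
    continuousAt_snd.eventually_mem (extChartAt_target_mem_nhds (I := 𝓘(𝕜, E)) (1 : G))]
    with p hp hp₂
  simp only [mulInChart, invMulInChart, (extChartAt _ _).left_inv hp, mul_inv_cancel_left,
    (extChartAt _ _).right_inv hp₂]

theorem MonoidHom.eventually_inChart_mulInChart [Monoid G] [ContinuousMul G] [Monoid H]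
    (f : G →* H) (hf : ContinuousAt f 1) :
    ∀ᶠ p in 𝓝 (extChartAt 𝓘(𝕜, E) (1 : G) 1, extChartAt 𝓘(𝕜, E) (1 : G) 1),
      f.inChart 𝓘(𝕜, E) 𝓘(𝕜, F) (mulInChart 𝓘(𝕜, E) G p) =
        mulInChart 𝓘(𝕜, F) H (f.inChart 𝓘(𝕜, E) 𝓘(𝕜, F) p.1, f.inChart 𝓘(𝕜, E) 𝓘(𝕜, F) p.2) := by
  have hsrcH : (extChartAt 𝓘(𝕜, F) (1 : H)).source ∈ 𝓝 (f 1) := by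
    rw [map_one]
    exact extChartAt_source_mem_nhds 1
  have hsrc : ∀ᶠ q : G × G in 𝓝 (1, 1), q.1 * q.2 ∈ (extChartAt 𝓘(𝕜, E) (1 : G)).source ∧
      f q.1 ∈ (extChartAt 𝓘(𝕜, F) (1 : H)).source ∧
      f q.2 ∈ (extChartAt 𝓘(𝕜, F) (1 : H)).source :=
    ((continuousAt_fst.mul continuousAt_snd).eventually_mem
      (by simpa using extChartAt_source_mem_nhds (I := 𝓘(𝕜, E)) (1 : G))).and <|
      ((hf.comp (x := ((1 : G), (1 : G))) continuousAt_fst).eventually_mem hsrcH).and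
        ((hf.comp (x := ((1 : G), (1 : G))) continuousAt_snd).eventually_mem hsrcH)
  filter_upwards [(tendsto_extChartAt_symm_prodMk (1 : G) (1 : G)).eventually hsrc]
    with p ⟨hmul, h₁, h₂⟩
  simp only [MonoidHom.inChart, mulInChart, Function.comp_apply, (extChartAt _ _).left_inv hmul,
    (extChartAt _ _).left_inv h₁, (extChartAt _ _).left_inv h₂, map_mul]

theorem contDiffAt_mulInChart [Monoid G] {n : WithTop ℕ∞} [ContMDiffMul 𝓘(𝕜, E) n G] :
    ContDiffAt 𝕜 n (mulInChart 𝓘(𝕜, E) G)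
      (extChartAt 𝓘(𝕜, E) (1 : G) 1, extChartAt 𝓘(𝕜, E) (1 : G) 1) :=
  (contMDiff_mul 𝓘(𝕜, E) n).contMDiffAt.contDiffAt_extChartAt₂ (χ := fun g h : G => g * h)
    (mul_one 1)

theorem contDiffAt_invMulInChart [Group G] {n : WithTop ℕ∞} [LieGroup 𝓘(𝕜, E) n G] :
    ContDiffAt 𝕜 n (invMulInChart 𝓘(𝕜, E) G)
      (extChartAt 𝓘(𝕜, E) (1 : G) 1, extChartAt 𝓘(𝕜, E) (1 : G) 1) :=
  (contMDiff_fst.inv.mul contMDiff_snd).contMDiffAt.contDiffAt_extChartAt₂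
    (χ := fun g h : G => g⁻¹ * h) (by simp)

theorem MonoidHom.contMDiffAt_one_iff_contDiffAt_inChart [Monoid G] [Monoid H] (f : G →* H)
    {n : WithTop ℕ∞} :
    ContMDiffAt 𝓘(𝕜, E) 𝓘(𝕜, F) n f 1 ↔ ContinuousAt f 1 ∧
      ContDiffAt 𝕜 n (f.inChart 𝓘(𝕜, E) 𝓘(𝕜, F)) (extChartAt 𝓘(𝕜, E) (1 : G) 1) := by
  rw [contMDiffAt_iff, modelWithCornersSelf_coe, Set.range_id, contDiffWithinAt_univ, map_one]
  rfl

theorem MonoidHom.inChart_one [Monoid G] [Monoid H] (f : G →* H) :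
    f.inChart 𝓘(𝕜, E) 𝓘(𝕜, F) (extChartAt 𝓘(𝕜, E) (1 : G) 1) = extChartAt 𝓘(𝕜, F) (1 : H) 1 := by
  simp only [MonoidHom.inChart, Function.comp_apply, extChartAt_to_inv, map_one]

theorem MonoidHom.contMDiffAt_one_succ [Group G] [Monoid H] {n : ℕ}
    [LieGroup 𝓘(𝕜, E) (n + 1 : ℕ) G] [ContMDiffMul 𝓘(𝕜, F) (n + 1 : ℕ) H] (f : G →* H)
    (hf₁ : ContMDiffAt 𝓘(𝕜, E) 𝓘(𝕜, F) 1 f 1) (hf : ContMDiffAt 𝓘(𝕜, E) 𝓘(𝕜, F) n f 1) :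
    ContMDiffAt 𝓘(𝕜, E) 𝓘(𝕜, F) (n + 1 : ℕ) f 1 := by
  have := topologicalGroup_of_lieGroup 𝓘(𝕜, E) (n + 1 : ℕ) (G := G)
  refine f.contMDiffAt_one_iff_contDiffAt_inChart.2 ⟨hf₁.continuousAt, ?_⟩
  exact_mod_cast contDiffAt_succ_of_map_mul
    ((contDiffAt_mulInChart (n := (n + 1 : ℕ))).of_le (by simp))
    (by exact_mod_cast contDiffAt_invMulInChart (n := (n + 1 : ℕ)))
    (by exact_mod_cast contDiffAt_mulInChart (n := (n + 1 : ℕ))) f.inChart_one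
    (f.contMDiffAt_one_iff_contDiffAt_inChart.1 hf₁).2
    (f.contMDiffAt_one_iff_contDiffAt_inChart.1 hf).2
    (f.eventually_inChart_mulInChart hf₁.continuousAt) eventually_mulInChart_invMulInChart
    (.of_forall invMulInChart_self) eventually_mulInChart_one

end InModelCharts

theorem MonoidHom.contMDiff_of_contMDiffAt_one {𝕜 : Type*} [NontriviallyNormedField 𝕜]
    {E F HG HH : Type*} [NormedAddCommGroup E] [NormedSpace 𝕜 E] [NormedAddCommGroup F]
    [NormedSpace 𝕜 F] [TopologicalSpace HG] [TopologicalSpace HH] {I : ModelWithCorners 𝕜 E HG}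
    {I' : ModelWithCorners 𝕜 F HH} {G H : Type*} [TopologicalSpace G] [ChartedSpace HG G]
    [Group G] [TopologicalSpace H] [ChartedSpace HH H] [Monoid H] {n : WithTop ℕ∞}
    [ContMDiffMul I n G] [ContMDiffMul I' n H] (f : G →* H) (hf : ContMDiffAt I I' n f 1) :
    ContMDiff I I' n f := by
  intro g
  have hf_eq : (f : G → H) = (f g * ·) ∘ f ∘ (g⁻¹ * ·) := by
    ext x
    rw [Function.comp_apply, Function.comp_apply, ← map_mul, mul_inv_cancel_left]
  rw [hf_eq]
  exact contMDiff_mul_left.contMDiffAt.comp g <|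
    hf.comp_of_eq contMDiff_mul_left.contMDiffAt (inv_mul_cancel g)

theorem c1_homomorphism_is_smooth_general
    {E : Type*} [NormedAddCommGroup E] [NormedSpace ℝ E]
    {F : Type*} [NormedAddCommGroup F] [NormedSpace ℝ F]
    {G : Type*} [TopologicalSpace G] [ChartedSpace E G] [Group G] [LieGroup 𝓘(ℝ, E) (⊤ : ℕ∞) G]
    {H : Type*} [TopologicalSpace H] [ChartedSpace F H] [Group H] [LieGroup 𝓘(ℝ, F) (⊤ : ℕ∞) H]
    (f : G →* H)
    (hf : ContMDiff 𝓘(ℝ, E) 𝓘(ℝ, F) 1 f) :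
    ContMDiff 𝓘(ℝ, E) 𝓘(ℝ, F) (⊤ : ℕ∞) f := by
  refine contMDiff_infty.2 fun n => ?_
  induction n with
  | zero => exact hf.of_le (by simp)
  | succ n ih => exact f.contMDiff_of_contMDiffAt_one (f.contMDiffAt_one_succ (hf 1) (ih 1))

/-- A `C¹` group homomorphism between Banach Lie groups is smooth. -/
theorem c1_homomorphism_is_smooth
    {E : Type*} [NormedAddCommGroup E] [NormedSpace ℝ E] [CompleteSpace E]
    {F : Type*} [NormedAddCommGroup F] [NormedSpace ℝ F] [CompleteSpace F]
    {G : Type*} [TopologicalSpace G] [ChartedSpace E G] [Group G] [LieGroup 𝓘(ℝ, E) (⊤ : ℕ∞) G]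
    {H : Type*} [TopologicalSpace H] [ChartedSpace F H] [Group H] [LieGroup 𝓘(ℝ, F) (⊤ : ℕ∞) H]
    (f : G →* H)
    (hf : ContMDiff 𝓘(ℝ, E) 𝓘(ℝ, F) 1 f) :
    ContMDiff 𝓘(ℝ, E) 𝓘(ℝ, F) (⊤ : ℕ∞) f :=
  c1_homomorphism_is_smooth_general f hf
end

section
/- Let E be a finite-dimensional real normed space, U ⊆ E open, F a real normed space, α ∈ (0,1], and f : U → F a map. If for every continuous linear functional ℓ : F → ℝ the composite ℓ ∘ f : U → ℝ is locally Hölder of exponent α, then f itself is locally Hölder of exponent α. -/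
/-!
Fix a closed ball `B ⊆ U`; it is compact. A map that is locally `α`-Hölder near every point of
a compact set is `α`-Hölder on all of it: it is continuous, hence bounded, which takes care of
pairs of points far apart, and a Lebesgue number of a finite cover by Hölder neighbourhoods takes
care of close pairs. So every `ℓ ∘ f` is `α`-Hölder on `B` with some constant `C ℓ`, i.e. the
difference quotients `(f z - f y) / ‖z - y‖ ^ α`, `y, z ∈ B`, are weakly bounded. By the uniform
boundedness principle in the double dual they are bounded in norm, which is the Hölder bound for
`f` on `B`.
-/

open scoped Topology
open Metric

section Holder

variable {E F : Type*} [SeminormedAddCommGroup E] [SeminormedAddCommGroup F]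

def IsHolderOn (α : ℝ) (f : E → F) (s : Set E) : Prop :=
  ∃ C ≥ (0 : ℝ), ∀ y ∈ s, ∀ z ∈ s, ‖f z - f y‖ ≤ C * ‖z - y‖ ^ α

variable {α : ℝ} {f : E → F}

theorem IsHolderOn.continuousOn {s : Set E} (hα : 0 < α) (hf : IsHolderOn α f s) :
    ContinuousOn f s := by
  obtain ⟨C, -, hCf⟩ := hf
  intro p hp
  have hlim : Filter.Tendsto (fun z ↦ C * ‖z - p‖ ^ α) (𝓝[s] p) (𝓝 0) := by
    have hcont : Continuous fun z : E ↦ C * ‖z - p‖ ^ α :=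
      continuous_const.mul ((continuous_id.sub continuous_const).norm.rpow_const
        fun _ ↦ Or.inr hα.le)
    simpa [Real.zero_rpow hα.ne'] using (hcont.tendsto p).mono_left nhdsWithin_le_nhds
  rw [ContinuousWithinAt, tendsto_iff_norm_sub_tendsto_zero]
  exact squeeze_zero' (.of_forall fun _ ↦ norm_nonneg _)
    (eventually_nhdsWithin_of_forall fun z hz ↦ hCf p hp z hz) hlim

theorem isHolderOn_of_bounded_of_near {s : Set E} {M δ C : ℝ} (hα : 0 ≤ α) (hδ : 0 < δ)
    (hC : 0 ≤ C) (hM : ∀ y ∈ s, ∀ z ∈ s, ‖f z - f y‖ ≤ M)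
    (hnear : ∀ y ∈ s, ∀ z ∈ s, ‖z - y‖ < δ → ‖f z - f y‖ ≤ C * ‖z - y‖ ^ α) :
    IsHolderOn α f s := by
  refine ⟨max C (M / δ ^ α), hC.trans (le_max_left _ _), fun y hy z hz ↦ ?_⟩
  rcases lt_or_ge ‖z - y‖ δ with hlt | hge
  · exact (hnear y hy z hz hlt).trans (by gcongr; exact le_max_left _ _)
  · have hM₀ : 0 ≤ M := (norm_nonneg _).trans (hM y hy z hz)
    have hδα : 0 < δ ^ α := by positivity
    calc ‖f z - f y‖ ≤ M := hM y hy z hz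
      _ = M / δ ^ α * δ ^ α := by field_simp
      _ ≤ max C (M / δ ^ α) * ‖z - y‖ ^ α := by
        gcongr
        exact le_max_right _ _

theorem IsCompact.isHolderOn_of_forall_nhdsWithin {K : Set E} (hK : IsCompact K) (hα : 0 < α)
    (hf : ∀ p ∈ K, ∃ V ∈ 𝓝[K] p, IsHolderOn α f V) : IsHolderOn α f K := by
  have hcont : ContinuousOn f K := fun p hp ↦ by
    obtain ⟨V, hV, hfV⟩ := hf p hp
    exact (hfV.continuousOn hα p (mem_of_mem_nhdsWithin hp hV)).mono_of_mem_nhdsWithin hV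
  obtain ⟨M, hM⟩ := isBounded_iff.1 (hK.image_of_continuousOn hcont).isBounded
  choose! V hV C hC hCV using hf
  choose! ε hε hεV using fun p hp ↦ mem_nhdsWithin_iff.1 (hV p hp)
  obtain ⟨t, htK, hKt⟩ := hK.elim_nhds_subcover (fun p ↦ ball p (ε p))
    fun p hp ↦ ball_mem_nhds p (hε p hp)
  obtain ⟨δ, hδ, hδt⟩ := lebesgue_number_lemma_of_metric (c := fun p : t ↦ ball (p : E) (ε p)) hK
    (fun _ ↦ isOpen_ball) (by rwa [Set.iUnion_subtype])
  refine isHolderOn_of_bounded_of_near (M := M) hα.le hδ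
    (Finset.sum_nonneg fun p hp ↦ hC p (htK p hp)) (fun y hy z hz ↦ ?_) (fun y hy z hz hyz ↦ ?_)
  · simpa [dist_eq_norm] using hM (Set.mem_image_of_mem f hz) (Set.mem_image_of_mem f hy)
  · obtain ⟨⟨p, hp⟩, hyp⟩ := hδt y hy
    have hzδ : z ∈ ball y δ := by rwa [mem_ball, dist_eq_norm]
    have hVp : ∀ w ∈ ball y δ, w ∈ K → w ∈ V p := fun w hw hwK ↦ hεV p (htK p hp) ⟨hyp hw, hwK⟩
    calc ‖f z - f y‖ ≤ C p * ‖z - y‖ ^ α :=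
          hCV p (htK p hp) y (hVp y (mem_ball_self hδ) hy) z (hVp z hzδ hz)
      _ ≤ (∑ q ∈ t, C q) * ‖z - y‖ ^ α := by
        gcongr
        exact Finset.single_le_sum (fun q hq ↦ hC q (htK q hq)) hp

end Holder

theorem exists_norm_le_of_weakly_bounded {𝕜 F ι : Type*} [RCLike 𝕜] [NormedAddCommGroup F]
    [NormedSpace 𝕜 F] (v : ι → F) (hv : ∀ ℓ : StrongDual 𝕜 F, ∃ C, ∀ i, ‖ℓ (v i)‖ ≤ C) :
    ∃ C, ∀ i, ‖v i‖ ≤ C := by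
  obtain ⟨C, hC⟩ := banach_steinhaus (g := fun i ↦ NormedSpace.inclusionInDoubleDual 𝕜 F (v i)) hv
  exact ⟨C, fun i ↦ (NormedSpace.inclusionInDoubleDualLi 𝕜).norm_map (v i) ▸ hC i⟩

theorem isHolderOn_of_forall_dual {𝕜 E F : Type*} [RCLike 𝕜] [SeminormedAddCommGroup E]
    [NormedAddCommGroup F] [NormedSpace 𝕜 F] {α : ℝ} {f : E → F} {s : Set E}
    (hf : ∀ ℓ : StrongDual 𝕜 F, IsHolderOn α (ℓ ∘ f) s) : IsHolderOn α f s := by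
  choose C hC hCf using hf
  -- difference quotients, with the junk value `0⁻¹ = 0` where `‖z - y‖ ^ α = 0`
  set q : s × s → F := fun p ↦ (((‖(p.2 : E) - p.1‖ ^ α)⁻¹ : ℝ) : 𝕜) • (f p.2 - f p.1)
  obtain ⟨D, hD⟩ := exists_norm_le_of_weakly_bounded q fun ℓ ↦ ⟨C ℓ, fun ⟨⟨y, hy⟩, ⟨z, hz⟩⟩ ↦ by
    simpa [q, norm_smul, map_sub, abs_of_nonneg (by positivity : 0 ≤ ‖z - y‖ ^ α)] using
      inv_mul_le_of_le_mul₀ (by positivity) (hC ℓ) ((hCf ℓ y hy z hz).trans_eq (mul_comm _ _))⟩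
  refine ⟨max D 0, le_max_right _ _, fun y hy z hz ↦ ?_⟩
  rcases (show 0 ≤ ‖z - y‖ ^ α by positivity).eq_or_lt with ht | ht
  · have : ‖f z - f y‖ ≤ 0 := NormedSpace.norm_le_dual_bound 𝕜 _ le_rfl fun ℓ ↦ by
      simpa [← ht, map_sub] using hCf ℓ y hy z hz
    exact this.trans (by positivity)
  · calc ‖f z - f y‖ = ‖z - y‖ ^ α * ‖q (⟨y, hy⟩, ⟨z, hz⟩)‖ := by
          rw [norm_smul, RCLike.norm_ofReal, abs_of_pos (inv_pos.2 ht), ← mul_assoc,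
            mul_inv_cancel₀ ht.ne', one_mul]
      _ ≤ max D 0 * ‖z - y‖ ^ α := by
        rw [mul_comm]
        gcongr
        exact (hD _).trans (le_max_left _ _)

/-- If `E` is finite-dimensional, `U ⊆ E` is open and `ℓ ∘ f` is locally `α`-Hölder on `U`
for every continuous linear functional `ℓ` on `F`, then `f : U → F` is locally
`α`-Hölder on `U`. -/
theorem locally_holder_of_forall_functional_locally_holder
    {E : Type*} [NormedAddCommGroup E] [NormedSpace ℝ E] [FiniteDimensional ℝ E]
    {F : Type*} [NormedAddCommGroup F] [NormedSpace ℝ F]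
    {α : ℝ} (hα : α ∈ Set.Ioc (0 : ℝ) 1)
    {U : Set E} (hU : IsOpen U) (f : E → F)
    (hf : ∀ ℓ : F →L[ℝ] ℝ, ∀ x ∈ U, ∃ V ∈ 𝓝[U] x, V ⊆ U ∧ ∃ C ≥ (0 : ℝ),
      ∀ y ∈ V, ∀ z ∈ V, ‖ℓ (f z) - ℓ (f y)‖ ≤ C * ‖z - y‖ ^ α) :
    ∀ x ∈ U, ∃ V ∈ 𝓝[U] x, V ⊆ U ∧ ∃ C ≥ (0 : ℝ),
      ∀ y ∈ V, ∀ z ∈ V, ‖f z - f y‖ ≤ C * ‖z - y‖ ^ α := by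
  intro x hx
  obtain ⟨r, hr, hrU⟩ := nhds_basis_closedBall.mem_iff.1 (hU.mem_nhds hx)
  refine ⟨closedBall x r, mem_nhdsWithin_of_mem_nhds (closedBall_mem_nhds x hr), hrU, ?_⟩
  refine isHolderOn_of_forall_dual (𝕜 := ℝ) fun ℓ ↦
    (isCompact_closedBall x r).isHolderOn_of_forall_nhdsWithin hα.1 fun p hp ↦ ?_
  obtain ⟨V, hV, -, hℓV⟩ := hf ℓ p (hrU hp)
  exact ⟨V, nhdsWithin_mono p hrU hV, hℓV⟩
end

section
/- Let E and F be real Banach spaces, G and H Lie groups modelled on E and F, α ∈ (0, 1/2], and f : G → H a group homomorphism which is α-Hölder on a chart neighbourhood of the identity (with charts φ of G at 1 and ψ of H at 1, neighbourhood W and constant C). Then f satisfies a pointwise Hölder estimate at the identity with the improved exponent 3α/2: there exist an open neighbourhood W′ of 1 in G with W′ ⊆ W and a constant K ≥ 0 such that ‖ψ(f(x)) − ψ(1_H)‖ ≤ K·‖φ(x) − φ(1_G)‖^{3α/2} for all x ∈ W′. -/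
/-!
In the chart at `1` squaring is `v ↦ 2 v + o(v)`. So near `1`, squaring multiplies
`‖φ x - φ 1‖` by at most `A = 2 + 1/10` and, `f` being a homomorphism, multiplies
`‖ψ (f x) - ψ 1‖` by at least `B = 2 - 1/10`. Squaring `x` about `n ≈ log_A (r / ‖φ x - φ 1‖)`
times moves it to distance about `r` from `1`, where `ψ ∘ f` is bounded by continuity; hence
`‖ψ (f x) - ψ 1‖ ≲ B ^ (-n) ≲ ‖φ x - φ 1‖ ^ γ` as soon as `A ^ γ ≤ B`, which holds for
`γ = 3α/2 ≤ 3/4`.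
-/

open scoped Manifold Topology
open Set Filter

theorem norm_bounds_of_norm_sub_two_smul_le {E : Type*} [NormedAddCommGroup E] [NormedSpace ℝ E]
    {w a : E} {ε : ℝ} (h : ‖w - (2 : ℝ) • a‖ ≤ ε * ‖a‖) :
    (2 - ε) * ‖a‖ ≤ ‖w‖ ∧ ‖w‖ ≤ (2 + ε) * ‖a‖ := by
  have h2a : ‖(2 : ℝ) • a‖ = 2 * ‖a‖ := by rw [norm_smul, Real.norm_two]
  have := abs_le.mp ((abs_norm_sub_norm_le w ((2 : ℝ) • a)).trans h)
  constructor <;> linarith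

theorem exists_pos_forall_norm_chart_sub_le_imp_mem {E M : Type*} [NormedAddCommGroup E]
    [TopologicalSpace M] [ChartedSpace E M] {x : M} {U : Set M} (hU : U ∈ 𝓝 x) :
    ∃ r > 0, ∀ y ∈ (chartAt E x).source, ‖chartAt E x y - chartAt E x x‖ ≤ r → y ∈ U := by
  have hx := mem_chart_source E x
  have hU' : (chartAt E x).symm ⁻¹' U ∈ 𝓝 (chartAt E x x) := by
    refine (chartAt E x).symm.continuousAt ((chartAt E x).map_source hx) |>.preimage_mem_nhds ?_
    rwa [(chartAt E x).left_inv hx]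
  obtain ⟨r, hr, hball⟩ := Metric.nhds_basis_closedBall.mem_iff.mp hU'
  refine ⟨r, hr, fun y hy hyr => ?_⟩
  have := hball (by rwa [Metric.mem_closedBall, dist_eq_norm])
  rwa [mem_preimage, (chartAt E x).left_inv hy] at this

theorem continuousAt_of_norm_chart_sub_le_rpow {E F M N : Type*} [NormedAddCommGroup E]
    [NormedAddCommGroup F] [TopologicalSpace M] [ChartedSpace E M] [TopologicalSpace N]
    [ChartedSpace F N] {f : M → N} {x₀ : M} {W : Set M} (hW : W ∈ 𝓝 x₀)
    (hfW : f '' W ⊆ (chartAt F (f x₀)).source) {α C : ℝ} (hα : 0 < α)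
    (hf : ∀ x ∈ W, ‖chartAt F (f x₀) (f x) - chartAt F (f x₀) (f x₀)‖
      ≤ C * ‖chartAt E x₀ x - chartAt E x₀ x₀‖ ^ α) :
    ContinuousAt f x₀ := by
  have hsrc : f ⁻¹' (chartAt F (f x₀)).source ∈ 𝓝 x₀ :=
    mem_of_superset hW (image_subset_iff.mp hfW)
  refine ((chartAt F (f x₀)).continuousAt_iff_continuousAt_comp_left hsrc).mpr ?_
  have hφ : Tendsto (fun x => ‖chartAt E x₀ x - chartAt E x₀ x₀‖) (𝓝 x₀) (𝓝 0) :=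
    tendsto_iff_norm_sub_tendsto_zero.mp ((chartAt E x₀).continuousAt (mem_chart_source E x₀))
  rw [ContinuousAt, tendsto_iff_norm_sub_tendsto_zero]
  refine squeeze_zero' (Eventually.of_forall fun _ => norm_nonneg _) (eventually_of_mem hW hf) ?_
  simpa [Real.zero_rpow hα.ne'] using (hφ.rpow_const (Or.inr hα.le)).const_mul C

theorem iterate_bounds_of_step {X : Type*} (T : X → X) {S : Set X} {u v : X → ℝ} {A B r : ℝ}
    (hA : 1 ≤ A) (hB : 0 ≤ B)
    (hT : ∀ y ∈ S, u y ≤ r → T y ∈ S ∧ u (T y) ≤ A * u y ∧ B * v y ≤ v (T y))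
    {x : X} (hx : x ∈ S) (hux : 0 ≤ u x) :
    ∀ n : ℕ, A ^ n * u x ≤ r →
      T^[n] x ∈ S ∧ u (T^[n] x) ≤ A ^ n * u x ∧ B ^ n * v x ≤ v (T^[n] x)
  | 0, _ => by simpa using hx
  | n + 1, hn => by
    have hn' : A ^ n * u x ≤ r :=
      (mul_le_mul_of_nonneg_right (pow_le_pow_right₀ hA n.le_succ) hux).trans hn
    obtain ⟨hS, hu, hv⟩ := iterate_bounds_of_step T hA hB hT hx hux n hn'
    obtain ⟨hS', hu', hv'⟩ := hT _ hS (hu.trans hn')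
    rw [Function.iterate_succ_apply', pow_succ', pow_succ', mul_assoc, mul_assoc]
    exact ⟨hS', hu'.trans (mul_le_mul_of_nonneg_left hu (by linarith)),
      (mul_le_mul_of_nonneg_left hv hB).trans hv'⟩

theorem le_mul_rpow_of_iterate {X : Type*} (T : X → X) {S : Set X} {u v : X → ℝ}
    {A B M r γ : ℝ} (hA : 1 < A) (hγ : 0 ≤ γ) (hAB : A ^ γ ≤ B) (hM : 0 ≤ M)
    (hT : ∀ y ∈ S, u y ≤ r → T y ∈ S ∧ u (T y) ≤ A * u y ∧ B * v y ≤ v (T y))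
    (hvM : ∀ y ∈ S, u y ≤ r → v y ≤ M)
    {x : X} (hx : x ∈ S) (hux : 0 < u x) (hxr : u x ≤ r) :
    v x ≤ M * (A / r) ^ γ * u x ^ γ := by
  have hB : 0 < B := (Real.rpow_pos_of_pos (by linarith) γ).trans_le hAB
  obtain ⟨n, hn, hn'⟩ := exists_nat_pow_near ((one_le_div hux).mpr hxr) hA
  have hnr : A ^ n * u x ≤ r := (le_div_iff₀ hux).mp hn
  obtain ⟨hS, hu, hv⟩ := iterate_bounds_of_step T hA.le hB.le hT hx hux.le n hnr
  have hvx : v x ≤ M / B ^ n :=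
    (le_div_iff₀' (by positivity)).mpr (hv.trans (hvM _ hS (hu.trans hnr)))
  have hr : 0 < r := hux.trans_le hxr
  have hgrowth : 1 ≤ B ^ n * (A * u x / r) ^ γ := calc
    1 ≤ (A ^ n * (A * u x / r)) ^ γ := by
        refine Real.one_le_rpow ?_ hγ
        rw [← mul_div_assoc, ← mul_assoc, ← pow_succ, one_le_div hr]
        exact ((div_lt_iff₀ hux).mp hn').le
    _ = (A ^ γ) ^ n * (A * u x / r) ^ γ := by
        rw [Real.mul_rpow (by positivity) (by positivity), Real.rpow_pow_comm (by positivity)]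
    _ ≤ B ^ n * (A * u x / r) ^ γ := by gcongr
  calc v x ≤ M / B ^ n := hvx
    _ ≤ M * (A * u x / r) ^ γ := by
        rw [div_le_iff₀ (by positivity), mul_assoc]
        exact le_mul_of_one_le_right hM (by linarith)
    _ = M * (A / r) ^ γ * u x ^ γ := by
        rw [mul_div_right_comm, Real.mul_rpow (by positivity) hux.le, mul_assoc]

theorem two_add_rpow_three_fourths_le_two_sub :
    (2 + 1 / 10 : ℝ) ^ (3 / 4 : ℝ) ≤ 2 - 1 / 10 := by
  rw [← pow_le_pow_iff_left₀ (by positivity) (by norm_num) (by norm_num : (4 : ℕ) ≠ 0),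
    ← Real.rpow_natCast, ← Real.rpow_mul (by norm_num)]
  norm_num

section LieGroup

variable {E : Type*} [NormedAddCommGroup E] [NormedSpace ℝ E]
  {G : Type*} [TopologicalSpace G] [ChartedSpace E G] [Group G] [LieGroup 𝓘(ℝ, E) (⊤ : ℕ∞) G]

theorem hasFDerivAt_chart_mul_chart_symm :
    HasFDerivAt
      (fun p : E × E =>
        chartAt E (1 : G) ((chartAt E (1 : G)).symm p.1 * (chartAt E (1 : G)).symm p.2))
      (ContinuousLinearMap.fst ℝ E E + ContinuousLinearMap.snd ℝ E E)
      (chartAt E (1 : G) 1, chartAt E (1 : G) 1) := by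
  set φ := chartAt E (1 : G)
  set m := fun p : E × E => φ (φ.symm p.1 * φ.symm p.2)
  have hm : HasFDerivAt m (fderiv ℝ m (φ 1, φ 1)) (φ 1, φ 1) := by
    have h := ((contMDiff_mul 𝓘(ℝ, E) ((⊤ : ℕ∞) : WithTop ℕ∞)).mdifferentiable (by simp)
      ((1 : G), (1 : G))).differentiableWithinAt_writtenInExtChartAt
    simp only [writtenInExtChartAt, mul_one, extChartAt_prod] at h
    exact (differentiableWithinAt_univ.mp (by simpa [Function.comp_def] using h)).hasFDerivAt
  set L := fderiv ℝ m (φ 1, φ 1)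
  -- `m (a, φ 1) = a = m (φ 1, a)` near `φ 1`, so both partial derivatives of `m` are the identity.
  have h1 : φ.symm (φ 1) = 1 := φ.left_inv (mem_chart_source E 1)
  have htarget : ∀ᶠ a in 𝓝 (φ 1), a ∈ φ.target :=
    φ.open_target.mem_nhds (φ.map_source (mem_chart_source E 1))
  have hl : HasFDerivAt (fun a => m (a, φ 1)) (L.comp (.inl ℝ E E)) (φ 1) :=
    hm.comp (f := fun a => (a, φ 1)) (φ 1) (hasFDerivAt_prodMk_left _ _)
  have hr : HasFDerivAt (fun b => m (φ 1, b)) (L.comp (.inr ℝ E E)) (φ 1) :=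
    hm.comp (f := fun b => (φ 1, b)) (φ 1) (hasFDerivAt_prodMk_right _ _)
  convert hm using 1
  ext1
  · rw [hl.unique <| (hasFDerivAt_id _).congr_of_eventuallyEq <| htarget.mono fun a ha => by
      simp [m, h1, φ.right_inv ha]]
    ext; simp
  · rw [hr.unique <| (hasFDerivAt_id _).congr_of_eventuallyEq <| htarget.mono fun a ha => by
      simp [m, h1, φ.right_inv ha]]
    ext; simp

theorem hasFDerivAt_chart_sq_chart_symm :
    HasFDerivAt
      (fun v : E => chartAt E (1 : G) ((chartAt E (1 : G)).symm v * (chartAt E (1 : G)).symm v))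
      ((2 : ℝ) • ContinuousLinearMap.id ℝ E) (chartAt E (1 : G) 1) := by
  have h : HasFDerivAt (fun v : E => ((v, v) : E × E))
      ((ContinuousLinearMap.id ℝ E).prod (ContinuousLinearMap.id ℝ E)) (chartAt E (1 : G) 1) :=
    (hasFDerivAt_id _).prodMk (hasFDerivAt_id _)
  convert (hasFDerivAt_chart_mul_chart_symm (G := G)).comp _ h using 1
  · rfl
  · ext1 v
    simp [two_smul]

theorem eventually_norm_chart_sq_sub_two_smul_le {ε : ℝ} (hε : 0 < ε) :
    ∀ᶠ y in 𝓝 (1 : G), ‖chartAt E (1 : G) (y * y) - chartAt E (1 : G) 1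
        - (2 : ℝ) • (chartAt E (1 : G) y - chartAt E (1 : G) 1)‖
      ≤ ε * ‖chartAt E (1 : G) y - chartAt E (1 : G) 1‖ := by
  have h := (hasFDerivAt_chart_sq_chart_symm (E := E) (G := G)).isLittleO.def hε
  set φ := chartAt E (1 : G)
  filter_upwards [(φ.continuousAt (mem_chart_source E 1)).eventually h,
    chart_source_mem_nhds E (1 : G)] with y hy hsrc
  simpa [φ.left_inv hsrc, φ.left_inv (mem_chart_source E 1)] using hy

theorem eventually_norm_chart_sq_bounds {ε : ℝ} (hε : 0 < ε) :
    ∀ᶠ y in 𝓝 (1 : G),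
      (2 - ε) * ‖chartAt E (1 : G) y - chartAt E (1 : G) 1‖
          ≤ ‖chartAt E (1 : G) (y * y) - chartAt E (1 : G) 1‖ ∧
        ‖chartAt E (1 : G) (y * y) - chartAt E (1 : G) 1‖
          ≤ (2 + ε) * ‖chartAt E (1 : G) y - chartAt E (1 : G) 1‖ :=
  (eventually_norm_chart_sq_sub_two_smul_le hε).mono fun _ => norm_bounds_of_norm_sub_two_smul_le

theorem eventually_norm_chart_map_sub_le_mul_rpow
    {F : Type*} [NormedAddCommGroup F] [NormedSpace ℝ F]
    {H : Type*} [TopologicalSpace H] [ChartedSpace F H] [Group H] [LieGroup 𝓘(ℝ, F) (⊤ : ℕ∞) H]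
    (f : G →* H) (hf : ContinuousAt f 1) {γ : ℝ} (hγ0 : 0 ≤ γ) (hγ : γ ≤ 3 / 4) :
    ∃ K ≥ (0 : ℝ), ∀ᶠ x in 𝓝 (1 : G), ‖chartAt F (1 : H) (f x) - chartAt F (1 : H) 1‖
      ≤ K * ‖chartAt E (1 : G) x - chartAt E (1 : G) 1‖ ^ γ := by
  set φ := chartAt E (1 : G)
  set ψ := chartAt F (1 : H)
  have hf1 : Tendsto f (𝓝 1) (𝓝 1) := by simpa using hf.tendsto
  have hsq : Tendsto (fun y : G => y * y) (𝓝 1) (𝓝 1) := by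
    have : ContinuousMul G := continuousMul_of_contMDiffMul 𝓘(ℝ, E) ((⊤ : ℕ∞) : WithTop ℕ∞)
    have hc : Continuous fun y : G => y * y := by fun_prop
    simpa only [mul_one] using hc.tendsto 1
  have hψ : ∀ᶠ z in 𝓝 (1 : H), ‖ψ z - ψ 1‖ ≤ 1 :=
    (tendsto_iff_norm_sub_tendsto_zero.mp (ψ.continuousAt (mem_chart_source F 1))).eventually
      (eventually_le_nhds one_pos)
  have hstep : ∀ᶠ y in 𝓝 (1 : G), y * y ∈ φ.source ∧
      ‖φ (y * y) - φ 1‖ ≤ (2 + 1 / 10) * ‖φ y - φ 1‖ ∧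
      (2 - 1 / 10) * ‖ψ (f y) - ψ 1‖ ≤ ‖ψ (f (y * y)) - ψ 1‖ ∧ ‖ψ (f y) - ψ 1‖ ≤ 1 := by
    filter_upwards [hsq.eventually (chart_source_mem_nhds E 1),
      eventually_norm_chart_sq_bounds (E := E) (G := G) (ε := 1 / 10) (by norm_num),
      hf1.eventually (eventually_norm_chart_sq_bounds (E := F) (G := H) (ε := 1 / 10)
        (by norm_num)), hf1.eventually hψ] with y hsrc hG hH hbdd
    rw [map_mul]
    exact ⟨hsrc, hG.2, hH.1, hbdd⟩
  obtain ⟨r, hr, hball⟩ := exists_pos_forall_norm_chart_sub_le_imp_mem (E := E) hstep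
  refine ⟨((2 + 1 / 10) / r) ^ γ, by positivity, ?_⟩
  filter_upwards [chart_source_mem_nhds E (1 : G),
    (tendsto_iff_norm_sub_tendsto_zero.mp (φ.continuousAt (mem_chart_source E 1))).eventually
      (eventually_le_nhds hr)] with x hx hxr
  rcases (norm_nonneg (φ x - φ 1)).eq_or_lt with h0 | hpos
  · obtain rfl : x = 1 :=
      φ.injOn hx (mem_chart_source E 1) (sub_eq_zero.mp (norm_eq_zero.mp h0.symm))
    simp only [map_one, sub_self, norm_zero]
    positivity
  · have hAB : (2 + 1 / 10 : ℝ) ^ γ ≤ 2 - 1 / 10 :=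
      (Real.rpow_le_rpow_of_exponent_le (by norm_num) hγ).trans
        two_add_rpow_three_fourths_le_two_sub
    simpa using le_mul_rpow_of_iterate (fun y => y * y) (S := φ.source)
      (v := fun y => ‖ψ (f y) - ψ 1‖) (by norm_num) hγ0 hAB zero_le_one
      (fun y hy hyr => (hball y hy hyr).imp_right fun h => ⟨h.1, h.2.1⟩)
      (fun y hy hyr => (hball y hy hyr).2.2.2) hx hpos hxr

end LieGroup

theorem holder_exponent_improvement_at_one_general
    {E : Type*} [NormedAddCommGroup E] [NormedSpace ℝ E]
    {F : Type*} [NormedAddCommGroup F] [NormedSpace ℝ F]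
    {G : Type*} [TopologicalSpace G] [ChartedSpace E G] [Group G] [LieGroup 𝓘(ℝ, E) (⊤ : ℕ∞) G]
    {H : Type*} [TopologicalSpace H] [ChartedSpace F H] [Group H] [LieGroup 𝓘(ℝ, F) (⊤ : ℕ∞) H]
    {α : ℝ} (hα : α ∈ Set.Ioc (0 : ℝ) (1 / 2 : ℝ))
    (f : G →* H)
    {W : Set G} (hWopen : IsOpen W) (hW1 : (1 : G) ∈ W)
    (hfW : f '' W ⊆ (chartAt F (1 : H)).source)
    {C : ℝ}
    (hHolder : ∀ x ∈ W, ∀ y ∈ W,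
      ‖chartAt F (1 : H) (f x) - chartAt F (1 : H) (f y)‖
        ≤ C * ‖chartAt E (1 : G) x - chartAt E (1 : G) y‖ ^ α) :
    ∃ W' : Set G, IsOpen W' ∧ (1 : G) ∈ W' ∧ W' ⊆ W ∧
      ∃ K ≥ (0 : ℝ), ∀ x ∈ W',
        ‖chartAt F (1 : H) (f x) - chartAt F (1 : H) (1 : H)‖
          ≤ K * ‖chartAt E (1 : G) x - chartAt E (1 : G) (1 : G)‖ ^ (3 * α / 2) := by
  obtain ⟨hα0, hα2⟩ := hα
  have hf : ContinuousAt f 1 :=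
    continuousAt_of_norm_chart_sub_le_rpow (hWopen.mem_nhds hW1) (by rwa [map_one]) hα0
      fun x hx => by simpa only [map_one] using hHolder x hx 1 hW1
  obtain ⟨K, hK, hKV⟩ := eventually_norm_chart_map_sub_le_mul_rpow (E := E) (F := F) f hf
    (by positivity) (by linarith : 3 * α / 2 ≤ 3 / 4)
  obtain ⟨V, hVK, hVopen, hV1⟩ := mem_nhds_iff.mp hKV
  exact ⟨W ∩ V, hWopen.inter hVopen, ⟨hW1, hV1⟩, inter_subset_left, K, hK,
    fun x hx => hVK hx.2⟩

/-- A homomorphism between Banach Lie groups which is `α`-Hölder on a chart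
neighbourhood of the identity with `α ∈ (0, 1/2]` satisfies a pointwise Hölder estimate
at the identity with the improved exponent `3α/2`. -/
theorem holder_exponent_improvement_at_one
    {E : Type*} [NormedAddCommGroup E] [NormedSpace ℝ E] [CompleteSpace E]
    {F : Type*} [NormedAddCommGroup F] [NormedSpace ℝ F] [CompleteSpace F]
    {G : Type*} [TopologicalSpace G] [ChartedSpace E G] [Group G] [LieGroup 𝓘(ℝ, E) (⊤ : ℕ∞) G]
    {H : Type*} [TopologicalSpace H] [ChartedSpace F H] [Group H] [LieGroup 𝓘(ℝ, F) (⊤ : ℕ∞) H]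
    {α : ℝ} (hα : α ∈ Set.Ioc (0 : ℝ) (1 / 2 : ℝ))
    (f : G →* H)
    {W : Set G} (hWopen : IsOpen W) (hW1 : (1 : G) ∈ W)
    (hWsrc : W ⊆ (chartAt E (1 : G)).source)
    (hfW : f '' W ⊆ (chartAt F (1 : H)).source)
    {C : ℝ} (hC : 0 ≤ C)
    (hHolder : ∀ x ∈ W, ∀ y ∈ W,
      ‖chartAt F (1 : H) (f x) - chartAt F (1 : H) (f y)‖
        ≤ C * ‖chartAt E (1 : G) x - chartAt E (1 : G) y‖ ^ α) :
    ∃ W' : Set G, IsOpen W' ∧ (1 : G) ∈ W' ∧ W' ⊆ W ∧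
      ∃ K ≥ (0 : ℝ), ∀ x ∈ W',
        ‖chartAt F (1 : H) (f x) - chartAt F (1 : H) (1 : H)‖
          ≤ K * ‖chartAt E (1 : G) x - chartAt E (1 : G) (1 : G)‖ ^ (3 * α / 2) :=
  holder_exponent_improvement_at_one_general hα f hWopen hW1 hfW hHolder
end

section
/- Let E and F be real Banach spaces, G and H Lie groups modelled on E and F, α ∈ (1/2, 1], and f : G → H a group homomorphism which is α-Hölder on a chart neighbourhood of the identity (with charts φ of G at 1 and ψ of H at 1). Let γ : ℝ → G be a smooth curve with γ(0) = 1. Then there exists δ > 0 such that f(γ(s)) lies in the source of ψ for all |s| ≤ δ, for every t with 0 < |t| ≤ δ the limit L(t) := lim_{n→∞} 2ⁿ·(ψ(f(γ(2⁻ⁿ·t))) − ψ(1_H)) exists in F, and moreover the vector L(t)/t ∈ F is the same for all t with 0 < |t| ≤ δ. -/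
/-!
Write `g s = ψ (f (γ s)) - ψ 1`. In the charts at the identity, the group law of `G` and of `H` is
addition up to an error bounded by the product of the sizes of the two factors (the mixed second
difference of a `C²` map). Since `γ (s + t)` and `γ s * γ t` are then `O(|s| |t|)`-close and `f` is
`α`-Hölder, `g (s + t) - g s - g t = O(|s|^α |t|^α)`. For the rescaled map `2ⁿ g (2⁻ⁿ ·)` this
bound acquires a factor `(2^(1 - 2α))ⁿ`, which is summable exactly because `α > 1/2`; so
`2ⁿ g (2⁻ⁿ t)` converges for every `t`, the limit is additive, and it tends to `0` at `0` because
`g` does. An additive map `ℝ → F` continuous at `0` is `t ↦ t • v`.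
-/

open scoped Manifold Topology NNReal
open Filter Asymptotics Metric

theorem tendsto_abs_rpow_nhds_zero {α : ℝ} (hα : 0 < α) :
    Tendsto (fun t : ℝ => |t| ^ α) (𝓝 0) (𝓝 0) :=
  ((Real.continuous_rpow_const hα.le).comp continuous_abs).tendsto' 0 0
    (by simp [Real.zero_rpow hα.ne'])

theorem isBigO_sub_of_holderOn {X Y Z ι : Type*} [SeminormedAddCommGroup Y]
    [SeminormedAddCommGroup Z] {u : X → Y} {w : X → Z} {W : Set X} {C α : ℝ}
    (h : ∀ x ∈ W, ∀ y ∈ W, ‖u x - u y‖ ≤ C * ‖w x - w y‖ ^ α) {l : Filter ι} {a b : ι → X}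
    (ha : ∀ᶠ i in l, a i ∈ W) (hb : ∀ᶠ i in l, b i ∈ W) :
    (fun i => u (a i) - u (b i)) =O[l] fun i => ‖w (a i) - w (b i)‖ ^ α :=
  IsBigO.of_bound C <| by
    filter_upwards [ha, hb] with i hai hbi
    rw [Real.norm_of_nonneg (by positivity)]
    exact h _ hai _ hbi

section MixedDifference

variable {E₁ E₂ F : Type*} [NormedAddCommGroup E₁] [NormedSpace ℝ E₁] [NormedAddCommGroup E₂]
  [NormedSpace ℝ E₂] [NormedAddCommGroup F] [NormedSpace ℝ F] {θ : E₁ × E₂ → F} {p : E₁ × E₂}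

theorem norm_mixed_difference_le {r : ℝ} {K : ℝ≥0}
    (hdiff : ∀ q ∈ closedBall p r, DifferentiableAt ℝ θ q)
    (hlip : LipschitzOnWith K (fderiv ℝ θ) (closedBall p r)) {u : E₁} {v : E₂}
    (hu : ‖u - p.1‖ ≤ r) (hv : ‖v - p.2‖ ≤ r) :
    ‖θ (u, v) - θ (u, p.2) - θ (p.1, v) + θ p‖ ≤ K * (‖u - p.1‖ * ‖v - p.2‖) := by
  have mem : ∀ w z, ‖w - p.1‖ ≤ r → ‖z - p.2‖ ≤ r → (w, z) ∈ closedBall p r := fun w z hw hz => by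
    rw [mem_closedBall, Prod.dist_eq, dist_eq_norm, dist_eq_norm]
    exact max_le hw hz
  have hp2 : ‖p.2 - p.2‖ ≤ r := by simpa using (norm_nonneg _).trans hv
  -- mean value inequality in the first variable for `w ↦ θ (w, v) - θ (w, p.2)`
  have hderiv : ∀ w ∈ closedBall p.1 r, HasFDerivWithinAt (fun w => θ (w, v) - θ (w, p.2))
      ((fderiv ℝ θ (w, v) - fderiv ℝ θ (w, p.2)).comp (.inl ℝ E₁ E₂)) (closedBall p.1 r) w := by
    intro w hw
    rw [mem_closedBall, dist_eq_norm] at hw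
    have hd : ∀ z, ‖z - p.2‖ ≤ r →
        HasFDerivAt (fun w => θ (w, z)) ((fderiv ℝ θ (w, z)).comp (.inl ℝ E₁ E₂)) w :=
      fun z hz => (hdiff _ (mem w z hw hz)).hasFDerivAt.comp w (hasFDerivAt_prodMk_left w z)
    rw [ContinuousLinearMap.sub_comp]
    exact ((hd v hv).sub (hd p.2 hp2)).hasFDerivWithinAt
  have hbound : ∀ w ∈ closedBall p.1 r,
      ‖(fderiv ℝ θ (w, v) - fderiv ℝ θ (w, p.2)).comp (.inl ℝ E₁ E₂)‖ ≤ K * ‖v - p.2‖ := by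
    intro w hw
    rw [mem_closedBall, dist_eq_norm] at hw
    calc _ ≤ ‖fderiv ℝ θ (w, v) - fderiv ℝ θ (w, p.2)‖ * ‖ContinuousLinearMap.inl ℝ E₁ E₂‖ :=
          ContinuousLinearMap.opNorm_comp_le _ _
      _ ≤ ‖fderiv ℝ θ (w, v) - fderiv ℝ θ (w, p.2)‖ :=
          mul_le_of_le_one_right (norm_nonneg _) (ContinuousLinearMap.norm_inl_le_one ℝ E₁ E₂)
      _ ≤ K * ‖v - p.2‖ := by
          simpa [← dist_eq_norm, Prod.dist_eq] using
            hlip.dist_le_mul _ (mem w v hw hv) _ (mem w p.2 hw hp2)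
  have := (convex_closedBall p.1 r).norm_image_sub_le_of_norm_hasFDerivWithin_le hderiv hbound
    (mem_closedBall_self ((norm_nonneg _).trans hu)) (by simpa [dist_eq_norm] using hu)
  calc ‖θ (u, v) - θ (u, p.2) - θ (p.1, v) + θ p‖
      = ‖θ (u, v) - θ (u, p.2) - (θ (p.1, v) - θ (p.1, p.2))‖ := by congr 1; abel
    _ ≤ K * ‖v - p.2‖ * ‖u - p.1‖ := this
    _ = K * (‖u - p.1‖ * ‖v - p.2‖) := by ring

theorem ContDiffAt.isBigO_mixed_difference (hθ : ContDiffAt ℝ 2 θ p) :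
    (fun q : E₁ × E₂ => θ q - θ (q.1, p.2) - θ (p.1, q.2) + θ p) =O[𝓝 p]
      fun q => ‖q.1 - p.1‖ * ‖q.2 - p.2‖ := by
  obtain ⟨K, U, hU, hlip⟩ := (hθ.fderiv_right (m := 1) le_rfl).exists_lipschitzOnWith
  obtain ⟨r, hr, hball⟩ := nhds_basis_closedBall.mem_iff.mp
    (inter_mem hU (hθ.eventually (by simp)))
  have hdiff : ∀ q ∈ closedBall p r, DifferentiableAt ℝ θ q := fun q hq =>
    (show ContDiffAt ℝ 2 θ q from (hball hq).2).differentiableAt two_ne_zero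
  refine IsBigO.of_bound K ?_
  filter_upwards [closedBall_mem_nhds p hr] with q hq
  rw [mem_closedBall_iff_norm] at hq
  rw [Real.norm_of_nonneg (by positivity)]
  exact norm_mixed_difference_le hdiff
    (hlip.mono fun q hq => (hball hq).1) ((norm_fst_le _).trans hq) ((norm_snd_le _).trans hq)

end MixedDifference

theorem two_pow_mul_abs_rpow_mul_abs_rpow (n : ℕ) (α s t : ℝ) :
    (2 : ℝ) ^ n * (|(2 : ℝ)⁻¹ ^ n * s| ^ α * |(2 : ℝ)⁻¹ ^ n * t| ^ α)
      = ((2 : ℝ) ^ (1 - 2 * α)) ^ n * (|s| ^ α * |t| ^ α) := by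
  have h2 : ((2 : ℝ)⁻¹ ^ n) ^ α = (2 : ℝ) ^ (-(n * α)) := by
    rw [inv_pow, Real.inv_rpow (by positivity), ← Real.rpow_natCast, ← Real.rpow_mul (by norm_num),
      Real.rpow_neg (by norm_num)]
  have hρ : ((2 : ℝ) ^ (1 - 2 * α)) ^ n = (2 : ℝ) ^ (n : ℝ) * 2 ^ (-(n * α)) * 2 ^ (-(n * α)) := by
    rw [← Real.rpow_natCast, ← Real.rpow_mul (by norm_num), ← Real.rpow_add (by norm_num),
      ← Real.rpow_add (by norm_num)]
    ring_nf
  rw [abs_mul, abs_mul, abs_of_pos (by positivity : (0 : ℝ) < 2⁻¹ ^ n),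
    Real.mul_rpow (by positivity) (abs_nonneg _), Real.mul_rpow (by positivity) (abs_nonneg _), h2,
    hρ, Real.rpow_natCast]
  ring

theorem two_rpow_one_sub_two_mul_lt_one {α : ℝ} (hα : 1 / 2 < α) : (2 : ℝ) ^ (1 - 2 * α) < 1 :=
  Real.rpow_lt_one_of_one_lt_of_neg one_lt_two (by linarith)

noncomputable section Dyadic

variable {F : Type*} [NormedAddCommGroup F] [NormedSpace ℝ F] {g : ℝ → F} {c α δ : ℝ}

def dyadicSeq (g : ℝ → F) (t : ℝ) (n : ℕ) : F := (2 : ℝ) ^ n • g ((2 : ℝ)⁻¹ ^ n * t)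

@[simp] theorem dyadicSeq_zero (g : ℝ → F) (t : ℝ) : dyadicSeq g t 0 = g t := by simp [dyadicSeq]

theorem dyadicSeq_sub_succ (g : ℝ → F) (t : ℝ) (n : ℕ) :
    dyadicSeq g t n - dyadicSeq g t (n + 1) = (2 : ℝ)⁻¹ •
      (dyadicSeq g (t + t) (n + 1) - dyadicSeq g t (n + 1) - dyadicSeq g t (n + 1)) := by
  have hdouble : dyadicSeq g (t + t) (n + 1) = (2 : ℝ) • dyadicSeq g t n := by
    simp only [dyadicSeq]
    rw [show (2 : ℝ)⁻¹ ^ (n + 1) * (t + t) = 2⁻¹ ^ n * t by ring, pow_succ', mul_smul]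
  rw [hdouble]
  module

def AlmostAdditiveOn (g : ℝ → F) (c α δ : ℝ) : Prop :=
  ∀ a b : ℝ, |a| < δ → |b| < δ → ‖g (a + b) - g a - g b‖ ≤ c * (|a| ^ α * |b| ^ α)

theorem AlmostAdditiveOn.norm_dyadicSeq_add_sub_sub_le (hg : AlmostAdditiveOn g c α δ) {s t : ℝ}
    {n : ℕ} (hs : |(2 : ℝ)⁻¹ ^ n * s| < δ) (ht : |(2 : ℝ)⁻¹ ^ n * t| < δ) :
    ‖dyadicSeq g (s + t) n - dyadicSeq g s n - dyadicSeq g t n‖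
      ≤ c * (|s| ^ α * |t| ^ α) * ((2 : ℝ) ^ (1 - 2 * α)) ^ n := by
  have hdefect : dyadicSeq g (s + t) n - dyadicSeq g s n - dyadicSeq g t n = (2 : ℝ) ^ n •
      (g (2⁻¹ ^ n * s + 2⁻¹ ^ n * t) - g (2⁻¹ ^ n * s) - g (2⁻¹ ^ n * t)) := by
    simp only [dyadicSeq, mul_add, smul_sub]
  rw [hdefect, norm_smul, norm_pow, Real.norm_two]
  calc _ ≤ (2 : ℝ) ^ n * (c * (|(2 : ℝ)⁻¹ ^ n * s| ^ α * |(2 : ℝ)⁻¹ ^ n * t| ^ α)) :=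
        mul_le_mul_of_nonneg_left (hg _ _ hs ht) (by positivity)
    _ = _ := by rw [mul_left_comm, two_pow_mul_abs_rpow_mul_abs_rpow]; ring

theorem eventually_abs_two_inv_pow_mul_lt (hδ : 0 < δ) (t : ℝ) :
    ∀ᶠ n : ℕ in atTop, |(2 : ℝ)⁻¹ ^ n * t| < δ := by
  have : Tendsto (fun n : ℕ => |(2 : ℝ)⁻¹ ^ n * t|) atTop (𝓝 0) := by
    simpa using ((tendsto_pow_atTop_nhds_zero_of_lt_one (r := (2 : ℝ)⁻¹) (by norm_num)
      (by norm_num)).mul_const t).abs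
  exact this.eventually_lt_const hδ

theorem AlmostAdditiveOn.norm_dyadicSeq_sub_succ_le (hg : AlmostAdditiveOn g c α δ) {t : ℝ} {n : ℕ}
    (ht : |(2 : ℝ)⁻¹ ^ (n + 1) * t| < δ) :
    ‖dyadicSeq g t n - dyadicSeq g t (n + 1)‖
      ≤ c * (|t| ^ α * |t| ^ α) * (2 : ℝ) ^ (1 - 2 * α) / 2 * ((2 : ℝ) ^ (1 - 2 * α)) ^ n := by
  rw [dyadicSeq_sub_succ, norm_smul, norm_inv, Real.norm_two]
  calc _ ≤ 2⁻¹ * (c * (|t| ^ α * |t| ^ α) * ((2 : ℝ) ^ (1 - 2 * α)) ^ (n + 1)) :=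
        mul_le_mul_of_nonneg_left (hg.norm_dyadicSeq_add_sub_sub_le ht ht) (by norm_num)
    _ = _ := by ring

theorem AlmostAdditiveOn.cauchySeq_dyadicSeq (hg : AlmostAdditiveOn g c α δ) (hδ : 0 < δ)
    (hα : 1 / 2 < α) (t : ℝ) : CauchySeq (dyadicSeq g t) := by
  refine cauchySeq_of_summable_dist (summable_of_isBigO_nat
    (summable_geometric_of_lt_one (by positivity) (two_rpow_one_sub_two_mul_lt_one hα)) ?_)
  refine IsBigO.of_bound (c * (|t| ^ α * |t| ^ α) * (2 : ℝ) ^ (1 - 2 * α) / 2) ?_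
  filter_upwards [(tendsto_add_atTop_nat 1).eventually (eventually_abs_two_inv_pow_mul_lt hδ t)]
    with n hn
  rw [Real.norm_of_nonneg dist_nonneg, Real.norm_of_nonneg (by positivity), dist_eq_norm]
  exact hg.norm_dyadicSeq_sub_succ_le hn

def dyadicLimit (g : ℝ → F) (t : ℝ) : F := limUnder atTop (dyadicSeq g t)

variable [CompleteSpace F]

theorem AlmostAdditiveOn.tendsto_dyadicLimit (hg : AlmostAdditiveOn g c α δ) (hδ : 0 < δ)
    (hα : 1 / 2 < α) (t : ℝ) : Tendsto (dyadicSeq g t) atTop (𝓝 (dyadicLimit g t)) :=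
  tendsto_nhds_limUnder (cauchySeq_tendsto_of_complete (hg.cauchySeq_dyadicSeq hδ hα t))

theorem AlmostAdditiveOn.dyadicLimit_add (hg : AlmostAdditiveOn g c α δ) (hδ : 0 < δ)
    (hα : 1 / 2 < α) (s t : ℝ) : dyadicLimit g (s + t) = dyadicLimit g s + dyadicLimit g t := by
  have hlim := ((hg.tendsto_dyadicLimit hδ hα (s + t)).sub (hg.tendsto_dyadicLimit hδ hα s)).sub
    (hg.tendsto_dyadicLimit hδ hα t)
  have hzero : Tendsto (fun n => dyadicSeq g (s + t) n - dyadicSeq g s n - dyadicSeq g t n)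
      atTop (𝓝 0) := by
    refine squeeze_zero_norm' ?_ (by simpa using (tendsto_pow_atTop_nhds_zero_of_lt_one
      (by positivity) (two_rpow_one_sub_two_mul_lt_one hα)).const_mul (c * (|s| ^ α * |t| ^ α)))
    filter_upwards [eventually_abs_two_inv_pow_mul_lt hδ s, eventually_abs_two_inv_pow_mul_lt hδ t]
      with n hs ht
    exact hg.norm_dyadicSeq_add_sub_sub_le hs ht
  rw [← sub_eq_zero, ← sub_sub]
  exact tendsto_nhds_unique hlim hzero

theorem AlmostAdditiveOn.norm_sub_dyadicLimit_le (hg : AlmostAdditiveOn g c α δ) (hδ : 0 < δ)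
    (hα : 1 / 2 < α) {t : ℝ} (ht : |t| < δ) :
    ‖g t - dyadicLimit g t‖ ≤ c * (|t| ^ α * |t| ^ α) * (2 : ℝ) ^ (1 - 2 * α) / 2
      / (1 - (2 : ℝ) ^ (1 - 2 * α)) := by
  have hsmall : ∀ n : ℕ, |(2 : ℝ)⁻¹ ^ (n + 1) * t| < δ := fun n => by
    rw [abs_mul, abs_of_pos (by positivity)]
    exact lt_of_le_of_lt (mul_le_of_le_one_left (abs_nonneg t)
      (pow_le_one₀ (by norm_num) (by norm_num))) ht
  simpa [dist_eq_norm] using dist_le_of_le_geometric_of_tendsto₀ _ _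
    (two_rpow_one_sub_two_mul_lt_one hα)
    (fun n => (dist_eq_norm _ _).trans_le (hg.norm_dyadicSeq_sub_succ_le (hsmall n)))
    (hg.tendsto_dyadicLimit hδ hα t)

theorem AlmostAdditiveOn.tendsto_dyadicLimit_nhds_zero (hg : AlmostAdditiveOn g c α δ)
    (hδ : 0 < δ) (hα : 1 / 2 < α) (hg0 : Tendsto g (𝓝 0) (𝓝 0)) :
    Tendsto (dyadicLimit g) (𝓝 0) (𝓝 0) := by
  have hpow := tendsto_abs_rpow_nhds_zero (by linarith : 0 < α)
  have herr := (hpow.mul hpow).const_mul c |>.mul_const ((2 : ℝ) ^ (1 - 2 * α)) |>.div_const 2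
    |>.div_const (1 - (2 : ℝ) ^ (1 - 2 * α))
  simp only [mul_zero, zero_mul, zero_div] at herr
  refine squeeze_zero_norm' ?_ (by simpa using hg0.norm.add herr)
  filter_upwards [ball_mem_nhds (0 : ℝ) hδ] with t ht
  rw [mem_ball_zero_iff, Real.norm_eq_abs] at ht
  calc ‖dyadicLimit g t‖ = ‖g t - (g t - dyadicLimit g t)‖ := by rw [sub_sub_cancel]
    _ ≤ ‖g t‖ + ‖g t - dyadicLimit g t‖ := norm_sub_le _ _
    _ ≤ _ := add_le_add le_rfl (hg.norm_sub_dyadicLimit_le hδ hα ht)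

theorem AlmostAdditiveOn.dyadicLimit_eq_smul (hg : AlmostAdditiveOn g c α δ) (hδ : 0 < δ)
    (hα : 1 / 2 < α) (hg0 : Tendsto g (𝓝 0) (𝓝 0)) (t : ℝ) :
    dyadicLimit g t = t • dyadicLimit g 1 := by
  let L : ℝ →+ F := AddMonoidHom.mk' (dyadicLimit g) (hg.dyadicLimit_add hδ hα)
  have hL : Continuous L := continuous_of_continuousAt_zero L <| by
    rw [ContinuousAt, map_zero]
    exact hg.tendsto_dyadicLimit_nhds_zero hδ hα hg0
  exact (by simpa using (L.toRealLinearMap hL).map_smul t 1 : L t = t • L 1)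

theorem exists_tendsto_dyadicSeq_smul {α : ℝ} (hα : 1 / 2 < α)
    (hadd : (fun p : ℝ × ℝ => g (p.1 + p.2) - g p.1 - g p.2) =O[𝓝 0]
      fun p => |p.1| ^ α * |p.2| ^ α)
    (hg0 : Tendsto g (𝓝 0) (𝓝 0)) :
    ∃ v : F, ∀ t : ℝ, Tendsto (dyadicSeq g t) atTop (𝓝 (t • v)) := by
  obtain ⟨c, hc⟩ := hadd.bound
  obtain ⟨δ, hδ, hball⟩ := Metric.eventually_nhds_iff.1 hc
  have hg : AlmostAdditiveOn g c α δ := fun a b ha hb => by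
    have := @hball (a, b) (by simpa [Prod.dist_eq] using And.intro ha hb)
    rwa [Real.norm_of_nonneg (by positivity)] at this
  refine ⟨dyadicLimit g 1, fun t => ?_⟩
  rw [← hg.dyadicLimit_eq_smul hδ hα hg0]
  exact hg.tendsto_dyadicLimit hδ hα t

end Dyadic

theorem ContMDiffAt.contDiffAt_chartAt_comp {𝕜 : Type*} [NontriviallyNormedField 𝕜]
    {E' : Type*} [NormedAddCommGroup E'] [NormedSpace 𝕜 E']
    {E : Type*} [NormedAddCommGroup E] [NormedSpace 𝕜 E]
    {M : Type*} [TopologicalSpace M] [ChartedSpace E M] {n : WithTop ℕ∞}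
    [IsManifold 𝓘(𝕜, E) n M] {σ : E' → M} {x : E'} {y : M}
    (hσ : ContMDiffAt 𝓘(𝕜, E') 𝓘(𝕜, E) n σ x) (hy : σ x ∈ (chartAt E y).source) :
    ContDiffAt 𝕜 n (chartAt E y ∘ σ) x :=
  ((contMDiffAt_iff_target_of_mem_source hy).1 hσ).2.contDiffAt

def chartDisplacement (F : Type*) [NormedAddCommGroup F] {G H : Type*} [MulOneClass G]
    [MulOneClass H] [TopologicalSpace H] [ChartedSpace F H] (f : G →* H) (γ : ℝ → G) (s : ℝ) : F :=
  chartAt F (1 : H) (f (γ s)) - chartAt F (1 : H) 1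

section ChartAtOne

variable {E : Type*} [NormedAddCommGroup E] [NormedSpace ℝ E]
  {F : Type*} [NormedAddCommGroup F]
  {G : Type*} [TopologicalSpace G] [ChartedSpace E G] [Monoid G]
  {H : Type*} [TopologicalSpace H] [ChartedSpace F H] [Monoid H]

local notation "φ" => chartAt E (1 : G)
local notation "ψ" => chartAt F (1 : H)

theorem isBigO_chartAt_mul_sub_sub_add [NormedSpace ℝ F] [ContMDiffMul 𝓘(ℝ, F) 2 H]
    {ι : Type*} {l : Filter ι} {x y : ι → H}
    (hx : ∀ᶠ i in l, x i ∈ (ψ).source) (hy : ∀ᶠ i in l, y i ∈ (ψ).source)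
    (hx' : Tendsto (fun i => ψ (x i)) l (𝓝 (ψ 1)))
    (hy' : Tendsto (fun i => ψ (y i)) l (𝓝 (ψ 1))) :
    (fun i => ψ (x i * y i) - ψ (x i) - ψ (y i) + ψ 1) =O[l]
      fun i => ‖ψ (x i) - ψ 1‖ * ‖ψ (y i) - ψ 1‖ := by
  have h1 : (1 : H) ∈ (ψ).source := mem_chart_source F 1
  have hsymm : ContMDiffAt 𝓘(ℝ, F) 𝓘(ℝ, F) 2 (ψ).symm (ψ 1) :=
    contMDiffOn_chart_symm.contMDiffAt ((chartAt F (1 : H)).open_target.mem_nhds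
      ((chartAt F (1 : H)).map_source h1))
  have hmul : ContMDiffAt 𝓘(ℝ, F × F) 𝓘(ℝ, F) 2 (fun q : F × F => (ψ).symm q.1 * (ψ).symm q.2)
      (ψ 1, ψ 1) :=
    (hsymm.comp (ψ 1, ψ 1) contDiff_fst.contMDiff.contMDiffAt).mul
      (hsymm.comp (ψ 1, ψ 1) contDiff_snd.contMDiff.contMDiffAt)
  have hB := (hmul.contDiffAt_chartAt_comp (y := 1)
    (by simp [(chartAt F (1 : H)).left_inv h1])).isBigO_mixed_difference.comp_tendsto
      (hx'.prodMk_nhds hy')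
  refine hB.congr' ?_ (Eventually.of_forall fun i => rfl)
  filter_upwards [hx, hy] with i hxi hyi
  simp [(chartAt F (1 : H)).left_inv hxi, (chartAt F (1 : H)).left_inv hyi,
    (chartAt F (1 : H)).left_inv h1]

theorem isBigO_chartAt_add_sub_chartAt_mul [ContMDiffMul 𝓘(ℝ, E) 2 G] {γ : ℝ → G}
    (hγ : ContMDiffAt 𝓘(ℝ, ℝ) 𝓘(ℝ, E) 2 γ 0) (hγ0 : γ 0 = 1) :
    (fun p : ℝ × ℝ => φ (γ (p.1 + p.2)) - φ (γ p.1 * γ p.2)) =O[𝓝 0] fun p => |p.1| * |p.2| := by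
  have hsum : ContMDiffAt 𝓘(ℝ, ℝ × ℝ) 𝓘(ℝ, E) 2 (fun p : ℝ × ℝ => γ (p.1 + p.2)) 0 :=
    hγ.comp_of_eq (contDiff_fst.add contDiff_snd).contMDiff.contMDiffAt (by simp)
  have hprod : ContMDiffAt 𝓘(ℝ, ℝ × ℝ) 𝓘(ℝ, E) 2 (fun p : ℝ × ℝ => γ p.1 * γ p.2) 0 :=
    (hγ.comp_of_eq contDiff_fst.contMDiff.contMDiffAt rfl).mul
      (hγ.comp_of_eq contDiff_snd.contMDiff.contMDiffAt rfl)
  have hθ : ContDiffAt ℝ 2 (fun p : ℝ × ℝ => φ (γ (p.1 + p.2)) - φ (γ p.1 * γ p.2)) 0 :=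
    (hsum.contDiffAt_chartAt_comp (y := 1) (by simp [hγ0])).sub
      (hprod.contDiffAt_chartAt_comp (y := 1) (by simp [hγ0]))
  -- the function vanishes on both axes, so it equals its own mixed difference
  simpa [hγ0] using hθ.isBigO_mixed_difference

variable {f : G →* H} {W : Set G} {C α : ℝ} {γ : ℝ → G}

theorem isBigO_chartDisplacement [IsManifold 𝓘(ℝ, E) 1 G] (hW : W ∈ 𝓝 1)
    (hf : ∀ x ∈ W, ∀ y ∈ W, ‖ψ (f x) - ψ (f y)‖ ≤ C * ‖φ x - φ y‖ ^ α) (hα : 0 ≤ α)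
    (hγ : ContMDiffAt 𝓘(ℝ, ℝ) 𝓘(ℝ, E) 1 γ 0) (hγ0 : γ 0 = 1) :
    chartDisplacement F f γ =O[𝓝 0] fun s => |s| ^ α := by
  have hγW : ∀ᶠ s in 𝓝 0, γ s ∈ W := hγ.continuousAt.tendsto.eventually_mem (by rwa [hγ0])
  have hlin : (fun s => ‖φ (γ s) - φ 1‖) =O[𝓝 0] fun s => |s| := by
    simpa [hγ0] using ((hγ.contDiffAt_chartAt_comp (y := 1) (by simp [hγ0])).differentiableAt
      one_ne_zero).isBigO_sub.norm_norm
  refine ((isBigO_sub_of_holderOn hf hγW (Eventually.of_forall fun _ => mem_of_mem_nhds hW)).trans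
    (hlin.rpow hα (Eventually.of_forall fun _ => abs_nonneg _))).congr_left fun s => ?_
  simp [chartDisplacement]

theorem isBigO_chartDisplacement_add_sub_sub [NormedSpace ℝ F] [ContMDiffMul 𝓘(ℝ, E) 2 G]
    [ContMDiffMul 𝓘(ℝ, F) 2 H] (hW : W ∈ 𝓝 1) (hfW : f '' W ⊆ (ψ).source)
    (hf : ∀ x ∈ W, ∀ y ∈ W, ‖ψ (f x) - ψ (f y)‖ ≤ C * ‖φ x - φ y‖ ^ α) (hα : 0 < α)
    (hγ : ContMDiffAt 𝓘(ℝ, ℝ) 𝓘(ℝ, E) 2 γ 0) (hγ0 : γ 0 = 1) :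
    (fun p : ℝ × ℝ => chartDisplacement F f γ (p.1 + p.2) - chartDisplacement F f γ p.1
      - chartDisplacement F f γ p.2) =O[𝓝 0] fun p => |p.1| ^ α * |p.2| ^ α := by
  have : ContinuousMul G := continuousMul_of_contMDiffMul 𝓘(ℝ, E) 2
  have hγ1 : Tendsto γ (𝓝 0) (𝓝 1) := hγ0 ▸ hγ.continuousAt.tendsto
  have hfst : Tendsto (fun p : ℝ × ℝ => p.1) (𝓝 0) (𝓝 0) := continuous_fst.tendsto' 0 0 rfl
  have hsnd : Tendsto (fun p : ℝ × ℝ => p.2) (𝓝 0) (𝓝 0) := continuous_snd.tendsto' 0 0 rfl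
  have hsum : Tendsto (fun p : ℝ × ℝ => γ (p.1 + p.2)) (𝓝 0) (𝓝 1) :=
    hγ1.comp (by simpa using hfst.add hsnd)
  have hprod : Tendsto (fun p : ℝ × ℝ => γ p.1 * γ p.2) (𝓝 0) (𝓝 1) := by
    simpa using (hγ1.comp hfst).mul (hγ1.comp hsnd)
  have hsrc : ∀ᶠ s in 𝓝 0, f (γ s) ∈ (ψ).source :=
    (hγ1.eventually_mem hW).mono fun _ hs => hfW ⟨_, hs, rfl⟩
  have hg := isBigO_chartDisplacement hW hf hα.le (hγ.of_le one_le_two) hγ0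
  have hψ : Tendsto (fun s => ψ (f (γ s))) (𝓝 0) (𝓝 (ψ 1)) :=
    tendsto_sub_nhds_zero_iff.1 (hg.trans_tendsto (tendsto_abs_rpow_nhds_zero hα))
  have hG : (fun p : ℝ × ℝ => ψ (f (γ (p.1 + p.2))) - ψ (f (γ p.1 * γ p.2))) =O[𝓝 0]
      fun p => |p.1| ^ α * |p.2| ^ α := by
    refine (isBigO_sub_of_holderOn hf (hsum.eventually_mem hW) (hprod.eventually_mem hW)).trans ?_
    refine ((isBigO_chartAt_add_sub_chartAt_mul hγ hγ0).norm_left.rpow hα.le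
      (Eventually.of_forall fun _ => by positivity)).congr_right fun p => ?_
    exact Real.mul_rpow (abs_nonneg _) (abs_nonneg _)
  have hH := (isBigO_chartAt_mul_sub_sub_add (x := fun p : ℝ × ℝ => f (γ p.1))
    (y := fun p : ℝ × ℝ => f (γ p.2)) (hfst.eventually hsrc) (hsnd.eventually hsrc)
    (hψ.comp hfst) (hψ.comp hsnd)).trans
    ((hg.comp_tendsto hfst).norm_left.mul (hg.comp_tendsto hsnd).norm_left)
  refine (hG.add hH).congr_left fun p => ?_
  simp only [chartDisplacement, map_mul]
  abel

end ChartAtOne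

theorem dyadic_limit_exists_and_independent_general
    {E : Type*} [NormedAddCommGroup E] [NormedSpace ℝ E]
    {F : Type*} [NormedAddCommGroup F] [NormedSpace ℝ F] [CompleteSpace F]
    {G : Type*} [TopologicalSpace G] [ChartedSpace E G] [Group G] [LieGroup 𝓘(ℝ, E) (⊤ : ℕ∞) G]
    {H : Type*} [TopologicalSpace H] [ChartedSpace F H] [Group H] [LieGroup 𝓘(ℝ, F) (⊤ : ℕ∞) H]
    {α : ℝ} (hα : α ∈ Set.Ioc (1 / 2 : ℝ) 1)
    (f : G →* H)
    (hf : ∃ W : Set G, IsOpen W ∧ (1 : G) ∈ W ∧ W ⊆ (chartAt E (1 : G)).source ∧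
      f '' W ⊆ (chartAt F (1 : H)).source ∧
      ∃ C ≥ (0 : ℝ), ∀ x ∈ W, ∀ y ∈ W,
        ‖chartAt F (1 : H) (f x) - chartAt F (1 : H) (f y)‖
          ≤ C * ‖chartAt E (1 : G) x - chartAt E (1 : G) y‖ ^ α)
    (γ : ℝ → G) (hγ : ContMDiff 𝓘(ℝ, ℝ) 𝓘(ℝ, E) (⊤ : ℕ∞) γ) (hγ0 : γ 0 = 1) :
    ∃ δ > (0 : ℝ),
      (∀ s : ℝ, |s| ≤ δ → f (γ s) ∈ (chartAt F (1 : H)).source) ∧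
      ∃ v : F, ∀ t : ℝ, 0 < |t| → |t| ≤ δ →
        Filter.Tendsto
          (fun n : ℕ => (2 : ℝ) ^ n •
            (chartAt F (1 : H) (f (γ ((2 : ℝ)⁻¹ ^ n * t))) - chartAt F (1 : H) (1 : H)))
          Filter.atTop (𝓝 (t • v)) := by
  obtain ⟨W, hWo, hW1, -, hfW, C, -, hf⟩ := hf
  have hW : W ∈ 𝓝 (1 : G) := hWo.mem_nhds hW1
  have hα0 : 0 < α := by linarith [hα.1]
  have hγ2 : ContMDiffAt 𝓘(ℝ, ℝ) 𝓘(ℝ, E) 2 γ 0 := (hγ 0).of_le (by decide)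
  obtain ⟨v, hv⟩ := exists_tendsto_dyadicSeq_smul hα.1
    (isBigO_chartDisplacement_add_sub_sub hW hfW hf hα0 hγ2 hγ0)
    ((isBigO_chartDisplacement hW hf hα0.le (hγ2.of_le one_le_two) hγ0).trans_tendsto
      (tendsto_abs_rpow_nhds_zero hα0))
  have hsrc : ∀ᶠ s in 𝓝 0, f (γ s) ∈ (chartAt F (1 : H)).source :=
    (hγ.continuous.tendsto' 0 1 hγ0 |>.eventually_mem hW).mono fun _ hs => hfW ⟨_, hs, rfl⟩
  obtain ⟨δ, hδ, hδsrc⟩ := nhds_basis_closedBall.eventually_iff.1 hsrc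
  exact ⟨δ, hδ, fun s hs => hδsrc (by simpa using hs), v, fun t _ _ => hv t⟩

/-- For an `α`-Hölder homomorphism (`α ∈ (1/2, 1]`) between Banach Lie groups and a
smooth curve `γ` through the identity, the limits
`L(t) = lim_n 2ⁿ·(ψ(f(γ(2⁻ⁿ t))) − ψ(1))` exist for all small `t ≠ 0`, and `L(t)/t`
is independent of `t`: there is `v ∈ F` with `L(t) = t • v` for all such `t`. -/
theorem dyadic_limit_exists_and_independent
    {E : Type*} [NormedAddCommGroup E] [NormedSpace ℝ E] [CompleteSpace E]
    {F : Type*} [NormedAddCommGroup F] [NormedSpace ℝ F] [CompleteSpace F]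
    {G : Type*} [TopologicalSpace G] [ChartedSpace E G] [Group G] [LieGroup 𝓘(ℝ, E) (⊤ : ℕ∞) G]
    {H : Type*} [TopologicalSpace H] [ChartedSpace F H] [Group H] [LieGroup 𝓘(ℝ, F) (⊤ : ℕ∞) H]
    {α : ℝ} (hα : α ∈ Set.Ioc (1 / 2 : ℝ) 1)
    (f : G →* H)
    (hf : ∃ W : Set G, IsOpen W ∧ (1 : G) ∈ W ∧ W ⊆ (chartAt E (1 : G)).source ∧
      f '' W ⊆ (chartAt F (1 : H)).source ∧
      ∃ C ≥ (0 : ℝ), ∀ x ∈ W, ∀ y ∈ W,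
        ‖chartAt F (1 : H) (f x) - chartAt F (1 : H) (f y)‖
          ≤ C * ‖chartAt E (1 : G) x - chartAt E (1 : G) y‖ ^ α)
    (γ : ℝ → G) (hγ : ContMDiff 𝓘(ℝ, ℝ) 𝓘(ℝ, E) (⊤ : ℕ∞) γ) (hγ0 : γ 0 = 1) :
    ∃ δ > (0 : ℝ),
      (∀ s : ℝ, |s| ≤ δ → f (γ s) ∈ (chartAt F (1 : H)).source) ∧
      ∃ v : F, ∀ t : ℝ, 0 < |t| → |t| ≤ δ →
        Filter.Tendsto
          (fun n : ℕ => (2 : ℝ) ^ n •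
            (chartAt F (1 : H) (f (γ ((2 : ℝ)⁻¹ ^ n * t))) - chartAt F (1 : H) (1 : H)))
          Filter.atTop (𝓝 (t • v)) :=
  dyadic_limit_exists_and_independent_general hα f hf γ hγ hγ0
end

section
/- Let E and F be real Banach spaces, G and H Lie groups modelled on E and F, α ∈ (0, 1], and f : G → H a group homomorphism which is α-Hölder on a chart neighbourhood of the identity. Then f is α-Hölder in charts near every point: for every x ∈ G there exist an open neighbourhood W_x of x contained in the source of the chart φ_x of G at x, with f(W_x) contained in the source of the chart ψ_{f(x)} of H at f(x), and a constant C_x ≥ 0 such that ‖ψ_{f(x)}(f(u)) − ψ_{f(x)}(f(v))‖ ≤ C_x·‖φ_x(u) − φ_x(v)‖^α for all u, v ∈ W_x. -/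
/-!
Since `f u = f x * f (x⁻¹ * u)`, the chart representative of `f` near `x` is the chart
representative of `f` near `1`, precomposed with left translation by `x⁻¹` and postcomposed with
left translation by `f x`, both read in charts. These translations are `C¹`, hence locally
Lipschitz, and a Hölder map sandwiched between Lipschitz maps stays Hölder with the same
exponent. The Hölder bound at `1` also makes `f` continuous at `1`, hence everywhere, which is
what makes the required neighbourhood of `x` exist.
-/
open scoped Manifold Topology NNReal
open Set Filter

theorem continuousAt_of_eventually_norm_sub_le_mul_rpow
    {X E F : Type*} [TopologicalSpace X] [SeminormedAddCommGroup E] [SeminormedAddCommGroup F]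
    {c : X → F} {g : X → E} {x : X} {C α : ℝ} (hα : 0 < α) (hg : ContinuousAt g x)
    (h : ∀ᶠ u in 𝓝 x, ‖c u - c x‖ ≤ C * ‖g u - g x‖ ^ α) :
    ContinuousAt c x := by
  have hbound : Tendsto (fun u => C * ‖g u - g x‖ ^ α) (𝓝 x) (𝓝 0) := by
    have hrpow : Tendsto (· ^ α) (𝓝 (0 : ℝ)) (𝓝 0) := by
      simpa [Real.zero_rpow hα.ne'] using
        (Real.continuousAt_rpow_const 0 α (Or.inr hα.le)).tendsto
    simpa using ((hrpow.comp (tendsto_iff_norm_sub_tendsto_zero.1 hg)).const_mul C)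
  rw [ContinuousAt, tendsto_iff_norm_sub_tendsto_zero]
  exact squeeze_zero' (.of_forall fun _ => norm_nonneg _) h hbound

theorem norm_sub_le_of_lipschitzOnWith_of_norm_sub_le_mul_rpow
    {E₁ E₂ F₁ F₂ : Type*} [SeminormedAddCommGroup E₁] [SeminormedAddCommGroup E₂]
    [SeminormedAddCommGroup F₁] [SeminormedAddCommGroup F₂]
    {A : E₁ → E₂} {B : F₁ → F₂} {s : Set E₁} {t : Set F₁} {K₁ K₂ : ℝ≥0}
    (hA : LipschitzOnWith K₁ A s) (hB : LipschitzOnWith K₂ B t) {C α : ℝ} (hC : 0 ≤ C)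
    (hα : 0 ≤ α) {a b : E₁} {c d : F₁} (ha : a ∈ s) (hb : b ∈ s) (hc : c ∈ t) (hd : d ∈ t)
    (h : ‖c - d‖ ≤ C * ‖A a - A b‖ ^ α) :
    ‖B c - B d‖ ≤ K₂ * C * K₁ ^ α * ‖a - b‖ ^ α :=
  calc ‖B c - B d‖
      ≤ K₂ * ‖c - d‖ := by simpa [dist_eq_norm] using hB.dist_le_mul c hc d hd
    _ ≤ K₂ * (C * (K₁ * ‖a - b‖) ^ α) := by
      gcongr
      exact h.trans (by gcongr; simpa [dist_eq_norm] using hA.dist_le_mul a ha b hb)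
    _ = K₂ * C * K₁ ^ α * ‖a - b‖ ^ α := by
      rw [Real.mul_rpow K₁.coe_nonneg (norm_nonneg _)]
      ring

theorem contDiffAt_chartAt_mul_left_symm
    {𝕜 : Type*} [NontriviallyNormedField 𝕜] {n : WithTop ℕ∞}
    {E : Type*} [NormedAddCommGroup E] [NormedSpace 𝕜 E]
    {G : Type*} [TopologicalSpace G] [ChartedSpace E G] [Group G] [LieGroup 𝓘(𝕜, E) n G]
    (a b : G) :
    ContDiffAt 𝕜 n (fun w => chartAt E (a * b) (a * (chartAt E b).symm w)) (chartAt E b b) := by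
  have h := (contMDiff_mul_left (I := 𝓘(𝕜, E)) (n := n) (a := a)).contMDiffAt (x := b)
  rw [contMDiffAt_iff] at h
  simpa [extChartAt_coe, Function.comp_def] using h.2.contDiffAt (by simp)

theorem exists_lipschitzOnWith_chartAt_mul_left_symm
    {E : Type*} [NormedAddCommGroup E] [NormedSpace ℝ E] {n : WithTop ℕ∞} (hn : 1 ≤ n)
    {G : Type*} [TopologicalSpace G] [ChartedSpace E G] [Group G] [LieGroup 𝓘(ℝ, E) n G]
    (a b : G) :
    ∃ K, ∃ t ∈ 𝓝 (chartAt E b b),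
      LipschitzOnWith K (fun w => chartAt E (a * b) (a * (chartAt E b).symm w)) t :=
  ((contDiffAt_chartAt_mul_left_symm (𝕜 := ℝ) a b).of_le hn).exists_lipschitzOnWith

theorem MonoidHom.continuous_of_norm_chartAt_sub_le_mul_rpow
    {E : Type*} [NormedAddCommGroup E] [NormedSpace ℝ E]
    {F : Type*} [NormedAddCommGroup F] [NormedSpace ℝ F] {n : WithTop ℕ∞}
    {G : Type*} [TopologicalSpace G] [ChartedSpace E G] [Group G] [LieGroup 𝓘(ℝ, E) n G]
    {H : Type*} [TopologicalSpace H] [ChartedSpace F H] [Group H] [LieGroup 𝓘(ℝ, F) n H]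
    (f : G →* H) {W : Set G} (hW : W ∈ 𝓝 1)
    (hfW : MapsTo f W (chartAt F (1 : H)).source) {C α : ℝ} (hα : 0 < α)
    (hf : ∀ x ∈ W, ‖chartAt F (1 : H) (f x) - chartAt F (1 : H) (f 1)‖
      ≤ C * ‖chartAt E (1 : G) x - chartAt E (1 : G) 1‖ ^ α) :
    Continuous f := by
  have := topologicalGroup_of_lieGroup 𝓘(ℝ, E) n (G := G)
  have := topologicalGroup_of_lieGroup 𝓘(ℝ, F) n (G := H)
  refine continuous_of_continuousAt_one f ?_
  rw [(chartAt F (1 : H)).continuousAt_iff_continuousAt_comp_left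
    (mem_of_superset hW hfW)]
  exact continuousAt_of_eventually_norm_sub_le_mul_rpow hα
    ((chartAt E (1 : G)).continuousAt (mem_chart_source E 1)) (mem_of_superset hW hf)

theorem MonoidHom.exists_mem_nhds_norm_chartAt_sub_le_mul_rpow
    {E : Type*} [NormedAddCommGroup E] [NormedSpace ℝ E]
    {F : Type*} [NormedAddCommGroup F] [NormedSpace ℝ F] {n : WithTop ℕ∞} (hn : 1 ≤ n)
    {G : Type*} [TopologicalSpace G] [ChartedSpace E G] [Group G] [LieGroup 𝓘(ℝ, E) n G]
    {H : Type*} [TopologicalSpace H] [ChartedSpace F H] [Group H] [LieGroup 𝓘(ℝ, F) n H]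
    (f : G →* H) (hfc : Continuous f) {W : Set G} (hW : W ∈ 𝓝 1)
    (hfW : MapsTo f W (chartAt F (1 : H)).source) {C α : ℝ} (hC : 0 ≤ C) (hα : 0 ≤ α)
    (hf : ∀ x ∈ W, ∀ y ∈ W, ‖chartAt F (1 : H) (f x) - chartAt F (1 : H) (f y)‖
      ≤ C * ‖chartAt E (1 : G) x - chartAt E (1 : G) y‖ ^ α) (x : G) :
    ∃ Cx ≥ (0 : ℝ), ∃ N ∈ 𝓝 x, ∀ u ∈ N, ∀ v ∈ N,
      ‖chartAt F (f x) (f u) - chartAt F (f x) (f v)‖ ≤ Cx * ‖chartAt E x u - chartAt E x v‖ ^ α := by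
  have := topologicalGroup_of_lieGroup 𝓘(ℝ, E) n (G := G)
  obtain ⟨K₁, s, hs, hA⟩ := exists_lipschitzOnWith_chartAt_mul_left_symm (E := E) hn x⁻¹ x
  obtain ⟨K₂, t, ht, hB⟩ := exists_lipschitzOnWith_chartAt_mul_left_symm (E := F) hn (f x) (1 : H)
  simp only [inv_mul_cancel, mul_one] at hA hB
  have hleft : Tendsto (x⁻¹ * ·) (𝓝 x) (𝓝 1) :=
    (continuous_const_mul x⁻¹).tendsto' x 1 (inv_mul_cancel x)
  have hchart : Tendsto (chartAt F (1 : H) ∘ f) (𝓝 1) (𝓝 (chartAt F (1 : H) 1)) :=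
    ((chartAt F (1 : H)).continuousAt (mem_chart_source F 1)).tendsto.comp
      (hfc.tendsto' 1 1 (map_one f))
  have hN : (chartAt E x).source ∩ chartAt E x ⁻¹' s ∩
      (x⁻¹ * ·) ⁻¹' (W ∩ (chartAt F (1 : H) ∘ f) ⁻¹' t) ∈ 𝓝 x :=
    inter_mem (inter_mem ((chartAt E x).open_source.mem_nhds (mem_chart_source E x))
      ((chartAt E x).continuousAt (mem_chart_source E x) hs)) (hleft (inter_mem hW (hchart ht)))
  refine ⟨K₂ * C * K₁ ^ α, by positivity, _, hN, ?_⟩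
  rintro u ⟨⟨hu, hus⟩, huW, hut⟩ v ⟨⟨hv, hvs⟩, hvW, hvt⟩
  have key := norm_sub_le_of_lipschitzOnWith_of_norm_sub_le_mul_rpow hA hB hC hα hus hvs hut hvt
    (by simpa [(chartAt E x).left_inv hu, (chartAt E x).left_inv hv] using hf _ huW _ hvW)
  simpa [(chartAt F (1 : H)).left_inv (hfW huW), (chartAt F (1 : H)).left_inv (hfW hvW),
    ← map_mul] using key

theorem holder_at_one_implies_holder_everywhere_general
    {E : Type*} [NormedAddCommGroup E] [NormedSpace ℝ E]
    {F : Type*} [NormedAddCommGroup F] [NormedSpace ℝ F]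
    {G : Type*} [TopologicalSpace G] [ChartedSpace E G] [Group G] [LieGroup 𝓘(ℝ, E) (⊤ : ℕ∞) G]
    {H : Type*} [TopologicalSpace H] [ChartedSpace F H] [Group H] [LieGroup 𝓘(ℝ, F) (⊤ : ℕ∞) H]
    {α : ℝ} (hα : α ∈ Set.Ioc (0 : ℝ) 1)
    (f : G →* H)
    (hf : ∃ W : Set G, IsOpen W ∧ (1 : G) ∈ W ∧ W ⊆ (chartAt E (1 : G)).source ∧
      f '' W ⊆ (chartAt F (1 : H)).source ∧
      ∃ C ≥ (0 : ℝ), ∀ x ∈ W, ∀ y ∈ W,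
        ‖chartAt F (1 : H) (f x) - chartAt F (1 : H) (f y)‖
          ≤ C * ‖chartAt E (1 : G) x - chartAt E (1 : G) y‖ ^ α) :
    ∀ x : G, ∃ Wx : Set G, IsOpen Wx ∧ x ∈ Wx ∧ Wx ⊆ (chartAt E x).source ∧
      f '' Wx ⊆ (chartAt F (f x)).source ∧
      ∃ Cx ≥ (0 : ℝ), ∀ u ∈ Wx, ∀ v ∈ Wx,
        ‖chartAt F (f x) (f u) - chartAt F (f x) (f v)‖
          ≤ Cx * ‖chartAt E x u - chartAt E x v‖ ^ α := by
  obtain ⟨W, hWo, hW1, -, hfW, C, hC, hHol⟩ := hf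
  have hfW' : MapsTo f W (chartAt F (1 : H)).source := mapsTo_iff_image_subset.2 hfW
  have hfc : Continuous f := f.continuous_of_norm_chartAt_sub_le_mul_rpow (n := (⊤ : ℕ∞))
    (hWo.mem_nhds hW1) hfW' hα.1 fun x hx => hHol x hx 1 hW1
  intro x
  obtain ⟨Cx, hCx, N, hN, hNx⟩ := f.exists_mem_nhds_norm_chartAt_sub_le_mul_rpow
    (n := (⊤ : ℕ∞)) (by exact_mod_cast le_top) hfc (hWo.mem_nhds hW1) hfW' hC hα.1.le hHol x
  have hnhds : N ∩ (chartAt E x).source ∩ f ⁻¹' (chartAt F (f x)).source ∈ 𝓝 x :=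
    inter_mem (inter_mem hN ((chartAt E x).open_source.mem_nhds (mem_chart_source E x)))
      (hfc.continuousAt ((chartAt F (f x)).open_source.mem_nhds (mem_chart_source F (f x))))
  obtain ⟨Wx, hWx, hWxo, hxWx⟩ := mem_nhds_iff.1 hnhds
  exact ⟨Wx, hWxo, hxWx, fun u hu => (hWx hu).1.2, image_subset_iff.2 fun u hu => (hWx hu).2,
    Cx, hCx, fun u hu v hv => hNx u (hWx hu).1.1 v (hWx hv).1.1⟩

/-- A homomorphism between Banach Lie groups which is `α`-Hölder on a chart
neighbourhood of the identity is `α`-Hölder in charts near every point. -/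
theorem holder_at_one_implies_holder_everywhere
    {E : Type*} [NormedAddCommGroup E] [NormedSpace ℝ E] [CompleteSpace E]
    {F : Type*} [NormedAddCommGroup F] [NormedSpace ℝ F] [CompleteSpace F]
    {G : Type*} [TopologicalSpace G] [ChartedSpace E G] [Group G] [LieGroup 𝓘(ℝ, E) (⊤ : ℕ∞) G]
    {H : Type*} [TopologicalSpace H] [ChartedSpace F H] [Group H] [LieGroup 𝓘(ℝ, F) (⊤ : ℕ∞) H]
    {α : ℝ} (hα : α ∈ Set.Ioc (0 : ℝ) 1)
    (f : G →* H)
    (hf : ∃ W : Set G, IsOpen W ∧ (1 : G) ∈ W ∧ W ⊆ (chartAt E (1 : G)).source ∧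
      f '' W ⊆ (chartAt F (1 : H)).source ∧
      ∃ C ≥ (0 : ℝ), ∀ x ∈ W, ∀ y ∈ W,
        ‖chartAt F (1 : H) (f x) - chartAt F (1 : H) (f y)‖
          ≤ C * ‖chartAt E (1 : G) x - chartAt E (1 : G) y‖ ^ α) :
    ∀ x : G, ∃ Wx : Set G, IsOpen Wx ∧ x ∈ Wx ∧ Wx ⊆ (chartAt E x).source ∧
      f '' Wx ⊆ (chartAt F (f x)).source ∧
      ∃ Cx ≥ (0 : ℝ), ∀ u ∈ Wx, ∀ v ∈ Wx,
        ‖chartAt F (f x) (f u) - chartAt F (f x) (f v)‖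
          ≤ Cx * ‖chartAt E x u - chartAt E x v‖ ^ α :=
  holder_at_one_implies_holder_everywhere_general hα f hf
end
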